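/- arXiv:1007.0134 — 9 statements merged into one kernel-verified Lean document; each statement's English description precedes it below -/
import Mathlib

section
/- Soundness of the consistency-checking encoding: Let (V,E,σ) be an influence graph with a designated set of input vertices and μ : V → {+,−} a partial vertex labeling. If the disjunctive logic program P_C ∪ τ((V,E,σ),μ) has an answer set, then (V,E,σ) and μ are consistent. -/
/-- Sign multiplication: `true` stands for `+` and `false` for `−`
(`+·+ = −·− = +`, `+·− = −·+ = −`). -/
def signMul (a b : Bool) : Bool := a == b

/-- `σ'` and `μ'` are witnessing labelings for `W` in the influence graph with
vertex type `V`, edges `E`, partial edge labeling `σ`, partial vertex labeling `μ`,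
and input vertices `I`: they are total, extend `σ` and `μ`, and for every
non-input vertex `i ∈ W` there is an edge `(j, i) ∈ E` with
`μ' i = μ' j · σ' (j, i)`. -/
def Witnessing {V : Type} (E : Set (V × V)) (σ : V × V → Option Bool)
    (μ : V → Option Bool) (I : Set V) (W : Set V)
    (σ' : V × V → Bool) (μ' : V → Bool) : Prop :=
  (∀ e s, σ e = some s → σ' e = s) ∧
  (∀ i s, μ i = some s → μ' i = s) ∧
  (∀ i ∈ W, i ∉ I → ∃ j, (j, i) ∈ E ∧ μ' i = signMul (μ' j) (σ' (j, i)))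

/-- The influence graph `(V, E, σ)` with inputs `I` and the partial vertex
labeling `μ` are consistent: there are witnessing labelings for all of `V`. -/
def Consistent {V : Type} (E : Set (V × V)) (σ : V × V → Option Bool)
    (μ : V → Option Bool) (I : Set V) : Prop :=
  ∃ σ' μ', Witnessing E σ μ I Set.univ σ' μ'

/-- A disjunctive rule `(H, B⁺, B⁻)` over atoms `A`. -/
structure Rule (A : Type) where
  head : Set A
  pos : Set A
  neg : Set A

/-- `X` satisfies a rule: if `B⁺ ⊆ X` and `B⁻ ∩ X = ∅` then `H ∩ X ≠ ∅`. -/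
def RuleSat {A : Type} (X : Set A) (r : Rule A) : Prop :=
  r.pos ⊆ X → r.neg ∩ X = ∅ → (r.head ∩ X).Nonempty

/-- The reduct of a program `P` relative to `X`. -/
def reduct {A : Type} (P : Set (Rule A)) (X : Set A) : Set (Rule A) :=
  {r' | ∃ r ∈ P, r.neg ∩ X = ∅ ∧ r' = ⟨r.head, r.pos, ∅⟩}

/-- `X` is an answer set of `P`: `X` is a `⊆`-minimal set of atoms satisfying
every rule of the reduct `P^X`. -/
def IsAnswerSet {A : Type} (P : Set (Rule A)) (X : Set A) : Prop :=
  (∀ r ∈ reduct P X, RuleSat X r) ∧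
  ∀ Y, Y ⊆ X → (∀ r ∈ reduct P X, RuleSat Y r) → Y = X

/-- A fact: a rule with a singleton head and empty body. -/
def fact {A : Type} (a : A) : Rule A := ⟨{a}, ∅, ∅⟩

/-- Ground atoms of the consistency-checking encoding. -/
inductive AtomC (V : Type) : Type
  | vertex : V → AtomC V
  | edge : V → V → AtomC V
  | observedE : V → V → Bool → AtomC V
  | observedV : V → Bool → AtomC V
  | input : V → AtomC V
  | labelV : V → Bool → AtomC V
  | labelE : V → V → Bool → AtomC V
  | receive : V → Bool → AtomC V

/-- The instance translation `τ((V,E,σ),μ)`: facts describing the influence graph,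
the partial labelings, and the input vertices. -/
def tauC {V : Type} (E : Set (V × V)) (σ : V × V → Option Bool)
    (μ : V → Option Bool) (I : Set V) : Set (Rule (AtomC V)) :=
  {r | (∃ i : V, r = fact (AtomC.vertex i)) ∨
       (∃ j i, (j, i) ∈ E ∧ r = fact (AtomC.edge j i)) ∨
       (∃ j i s, (j, i) ∈ E ∧ σ (j, i) = some s ∧ r = fact (AtomC.observedE j i s)) ∨
       (∃ i s, μ i = some s ∧ r = fact (AtomC.observedV i s)) ∨
       (∃ i ∈ I, r = fact (AtomC.input i))}

/-- The consistency-checking program `P_C` (ground instantiation over all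
vertices, edges, and signs). -/
def PC {V : Type} (E : Set (V × V)) : Set (Rule (AtomC V)) :=
  {r | (∃ v : V, r = ⟨{AtomC.labelV v true, AtomC.labelV v false},
          {AtomC.vertex v}, ∅⟩) ∨
       (∃ u v, (u, v) ∈ E ∧ r = ⟨{AtomC.labelE u v true, AtomC.labelE u v false},
          {AtomC.edge u v}, ∅⟩) ∨
       (∃ v s, r = ⟨{AtomC.labelV v s}, {AtomC.observedV v s}, ∅⟩) ∨
       (∃ u v s, (u, v) ∈ E ∧ r = ⟨{AtomC.labelE u v s}, {AtomC.observedE u v s}, ∅⟩) ∨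
       (∃ u v s, (u, v) ∈ E ∧ r = ⟨{AtomC.receive v true},
          {AtomC.labelE u v s, AtomC.labelV u s}, ∅⟩) ∨
       (∃ u v s t, (u, v) ∈ E ∧ s ≠ t ∧ r = ⟨{AtomC.receive v false},
          {AtomC.labelE u v s, AtomC.labelV u t}, ∅⟩) ∨
       (∃ v s, r = ⟨∅, {AtomC.labelV v s}, {AtomC.receive v s, AtomC.input v}⟩)}

/-- If a rule with singleton head `{a}`, positive body `B ⊆ X`, and empty
negative body belongs to `P`, and `X` is an answer set, then `a ∈ X`. -/
lemma singleton_head_mem {A : Type} {P : Set (Rule A)} {X : Set A}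
    (hX : IsAnswerSet P X) {a : A} {B : Set A}
    (hr : (⟨{a}, B, ∅⟩ : Rule A) ∈ P) (hB : B ⊆ X) : a ∈ X := by
  have h := hX.1 ⟨{a}, B, ∅⟩ ⟨⟨{a}, B, ∅⟩, hr, by simp, rfl⟩
  obtain ⟨b, hb⟩ := h hB (by simp)
  have hb1 : b = a := hb.1
  exact hb1 ▸ hb.2

/-- Pruning lemma: if `a ∈ X` and every rule of `P` containing `a` in its head
(with negative body disjoint from `X` and positive body inside `X \ {a}`)
still has a head atom in `X \ {a}`, then we contradict minimality. -/
lemma prune {A : Type} {P : Set (Rule A)} {X : Set A}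
    (hX : IsAnswerSet P X) (a : A) (ha : a ∈ X)
    (h : ∀ r ∈ P, r.neg ∩ X = ∅ → r.pos ⊆ X \ {a} → a ∈ r.head →
      (r.head ∩ (X \ {a})).Nonempty) : False := by
  have hY : X \ {a} = X := by
    apply hX.2
    · exact Set.diff_subset
    · rintro r' ⟨r, hrP, hneg, rfl⟩
      intro hpos _
      by_cases hah : a ∈ r.head
      · exact h r hrP hneg hpos hah
      · have hpos' : r.pos ⊆ X := hpos.trans Set.diff_subset
        obtain ⟨b, hb⟩ := hX.1 ⟨r.head, r.pos, ∅⟩ ⟨r, hrP, hneg, rfl⟩ hpos' (by simp)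
        exact ⟨b, hb.1, hb.2, fun hba => hah ((show b = a from hba) ▸ hb.1)⟩
  rw [← hY] at ha
  exact ha.2 rfl

/-- Soundness of the consistency-checking encoding: if `P_C ∪ τ((V,E,σ),μ)`
has an answer set, then `(V,E,σ)` and `μ` are consistent. -/
theorem consistency_soundness {V : Type} [Fintype V]
    (E : Set (V × V)) (σ : V × V → Option Bool) (μ : V → Option Bool) (I : Set V)
    (hσ : ∀ e, σ e ≠ none → e ∈ E)
    (X : Set (AtomC V)) (hX : IsAnswerSet (PC E ∪ tauC E σ μ I) X) :
    Consistent E σ μ I := by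
  classical
  -- useful facts
  have hvert : ∀ v : V, AtomC.vertex v ∈ X := by
    intro v
    exact singleton_head_mem hX (Or.inr (Or.inl ⟨v, rfl⟩)) (by simp)
  have hedge : ∀ j i : V, (j, i) ∈ E → AtomC.edge j i ∈ X := by
    intro j i hE
    exact singleton_head_mem hX (Or.inr (Or.inr (Or.inl ⟨j, i, hE, rfl⟩))) (by simp)
  have hobsV : ∀ (v : V) (s : Bool), μ v = some s → AtomC.observedV v s ∈ X := by
    intro v s hμ
    exact singleton_head_mem hX
      (Or.inr (Or.inr (Or.inr (Or.inr (Or.inl ⟨v, s, hμ, rfl⟩))))) (by simp)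
  have hobsE : ∀ (u v : V) (s : Bool), (u, v) ∈ E → σ (u, v) = some s →
      AtomC.observedE u v s ∈ X := by
    intro u v s hE hs
    exact singleton_head_mem hX
      (Or.inr (Or.inr (Or.inr (Or.inl ⟨u, v, s, hE, hs, rfl⟩)))) (by simp)
  have hinput : ∀ i ∈ I, AtomC.input i ∈ X := by
    intro i hi
    exact singleton_head_mem hX
      (Or.inr (Or.inr (Or.inr (Or.inr (Or.inr ⟨i, hi, rfl⟩))))) (by simp)
  -- converse directions via pruning
  have hobsV' : ∀ (v : V) (s : Bool), AtomC.observedV v s ∈ X → μ v = some s := by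
    intro v s hmem
    by_contra hne
    apply prune hX _ hmem
    rintro r (hr | hr) hneg hpos hhead
    · rcases hr with ⟨v', rfl⟩ | ⟨u', v', _, rfl⟩ | ⟨v', s', rfl⟩ |
        ⟨u', v', s', _, rfl⟩ | ⟨u', v', s', _, rfl⟩ |
        ⟨u', v', s', t', _, _, rfl⟩ | ⟨v', s', rfl⟩ <;> simp [fact] at hhead
    · rcases hr with ⟨i', rfl⟩ | ⟨j', i', _, rfl⟩ | ⟨j', i', s', _, _, rfl⟩ |
        ⟨i', s', hμ', rfl⟩ | ⟨i', _, rfl⟩ <;> simp [fact] at hhead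
      obtain ⟨rfl, rfl⟩ := hhead
      exact (hne hμ').elim
  have hobsE' : ∀ (u v : V) (s : Bool), AtomC.observedE u v s ∈ X →
      σ (u, v) = some s := by
    intro u v s hmem
    by_contra hne
    apply prune hX _ hmem
    rintro r (hr | hr) hneg hpos hhead
    · rcases hr with ⟨v', rfl⟩ | ⟨u', v', _, rfl⟩ | ⟨v', s', rfl⟩ |
        ⟨u', v', s', _, rfl⟩ | ⟨u', v', s', _, rfl⟩ |
        ⟨u', v', s', t', _, _, rfl⟩ | ⟨v', s', rfl⟩ <;> simp [fact] at hhead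
    · rcases hr with ⟨i', rfl⟩ | ⟨j', i', _, rfl⟩ | ⟨j', i', s', _, hσ', rfl⟩ |
        ⟨i', s', _, rfl⟩ | ⟨i', _, rfl⟩ <;> simp [fact] at hhead
      obtain ⟨rfl, rfl, rfl⟩ := hhead
      exact (hne hσ').elim
  have hinput' : ∀ i : V, AtomC.input i ∈ X → i ∈ I := by
    intro i hmem
    by_contra hne
    apply prune hX _ hmem
    rintro r (hr | hr) hneg hpos hhead
    · rcases hr with ⟨v', rfl⟩ | ⟨u', v', _, rfl⟩ | ⟨v', s', rfl⟩ |
        ⟨u', v', s', _, rfl⟩ | ⟨u', v', s', _, rfl⟩ |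
        ⟨u', v', s', t', _, _, rfl⟩ | ⟨v', s', rfl⟩ <;> simp [fact] at hhead
    · rcases hr with ⟨i', rfl⟩ | ⟨j', i', _, rfl⟩ | ⟨j', i', s', _, _, rfl⟩ |
        ⟨i', s', _, rfl⟩ | ⟨i', hi', rfl⟩ <;> simp [fact] at hhead
      obtain rfl := hhead
      exact (hne hi').elim
  -- label derivation
  have hlabV : ∀ (v : V) (s : Bool), μ v = some s → AtomC.labelV v s ∈ X := by
    intro v s hμ
    exact singleton_head_mem hX (Or.inl (Or.inr (Or.inr (Or.inl ⟨v, s, rfl⟩))))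
      (by simp [hobsV v s hμ])
  have hlabE : ∀ (u v : V) (s : Bool), σ (u, v) = some s →
      AtomC.labelE u v s ∈ X := by
    intro u v s hs
    have hE : (u, v) ∈ E := hσ (u, v) (by simp [hs])
    exact singleton_head_mem hX
      (Or.inl (Or.inr (Or.inr (Or.inr (Or.inl ⟨u, v, s, hE, rfl⟩)))))
      (by simp [hobsE u v s hE hs])
  have hlabVor : ∀ v : V, AtomC.labelV v true ∈ X ∨ AtomC.labelV v false ∈ X := by
    intro v
    have h := hX.1 ⟨{AtomC.labelV v true, AtomC.labelV v false}, {AtomC.vertex v}, ∅⟩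
      ⟨⟨{AtomC.labelV v true, AtomC.labelV v false}, {AtomC.vertex v}, ∅⟩,
        Or.inl (Or.inl ⟨v, rfl⟩), by simp, rfl⟩
    obtain ⟨b, hb⟩ := h (by simp [hvert v]) (by simp)
    rcases hb.1 with h1 | h1
    · exact Or.inl (h1 ▸ hb.2)
    · exact Or.inr (h1 ▸ hb.2)
  -- uniqueness of labels
  have huniqV : ∀ v : V, ¬(AtomC.labelV v true ∈ X ∧ AtomC.labelV v false ∈ X) := by
    rintro v ⟨ht, hf⟩
    obtain ⟨b, hb, hbne⟩ : ∃ b : Bool, AtomC.labelV v b ∈ X ∧ μ v ≠ some b := by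
      rcases h : μ v with _ | c
      · exact ⟨true, ht, by simp [h]⟩
      · cases c
        · exact ⟨true, ht, by simp [h]⟩
        · exact ⟨false, hf, by simp [h]⟩
    apply prune hX _ hb
    rintro r (hr | hr) hneg hpos hhead
    · rcases hr with ⟨v', rfl⟩ | ⟨u', v', _, rfl⟩ | ⟨v', s', rfl⟩ |
        ⟨u', v', s', _, rfl⟩ | ⟨u', v', s', _, rfl⟩ |
        ⟨u', v', s', t', _, _, rfl⟩ | ⟨v', s', rfl⟩
      · -- disjunctive rule: the other label is still in X \ {a}
        simp only [Set.mem_insert_iff, Set.mem_singleton_iff, AtomC.labelV.injEq] at hhead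
        rcases hhead with ⟨rfl, rfl⟩ | ⟨rfl, rfl⟩
        · exact ⟨AtomC.labelV v false, by simp, hf, by simp⟩
        · exact ⟨AtomC.labelV v true, by simp, ht, by simp⟩
      · simp at hhead
      · -- supported by an observation: contradiction with hbne
        simp only [Set.mem_singleton_iff, AtomC.labelV.injEq] at hhead
        obtain ⟨rfl, rfl⟩ := hhead
        have : AtomC.observedV v b ∈ X :=
          (hpos (by simp)).1
        exact absurd (hobsV' v b this) hbne
      · simp at hhead
      · simp at hhead
      · simp at hhead
      · simp at hhead
    · rcases hr with ⟨i', rfl⟩ | ⟨j', i', _, rfl⟩ | ⟨j', i', s', _, _, rfl⟩ |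
        ⟨i', s', _, rfl⟩ | ⟨i', _, rfl⟩ <;> simp [fact] at hhead
  have huniqE : ∀ u v : V,
      ¬(AtomC.labelE u v true ∈ X ∧ AtomC.labelE u v false ∈ X) := by
    rintro u v ⟨ht, hf⟩
    obtain ⟨b, hb, hbne⟩ : ∃ b : Bool, AtomC.labelE u v b ∈ X ∧ σ (u, v) ≠ some b := by
      rcases h : σ (u, v) with _ | c
      · exact ⟨true, ht, by simp [h]⟩
      · cases c
        · exact ⟨true, ht, by simp [h]⟩
        · exact ⟨false, hf, by simp [h]⟩
    apply prune hX _ hb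
    rintro r (hr | hr) hneg hpos hhead
    · rcases hr with ⟨v', rfl⟩ | ⟨u', v', _, rfl⟩ | ⟨v', s', rfl⟩ |
        ⟨u', v', s', _, rfl⟩ | ⟨u', v', s', _, rfl⟩ |
        ⟨u', v', s', t', _, _, rfl⟩ | ⟨v', s', rfl⟩
      · simp at hhead
      · simp only [Set.mem_insert_iff, Set.mem_singleton_iff, AtomC.labelE.injEq] at hhead
        rcases hhead with ⟨rfl, rfl, rfl⟩ | ⟨rfl, rfl, rfl⟩
        · exact ⟨AtomC.labelE u v false, by simp, hf, by simp⟩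
        · exact ⟨AtomC.labelE u v true, by simp, ht, by simp⟩
      · simp at hhead
      · simp only [Set.mem_singleton_iff, AtomC.labelE.injEq] at hhead
        obtain ⟨rfl, rfl, rfl⟩ := hhead
        have : AtomC.observedE u v b ∈ X := (hpos (by simp)).1
        exact absurd (hobsE' u v b this) hbne
      · simp at hhead
      · simp at hhead
      · simp at hhead
    · rcases hr with ⟨i', rfl⟩ | ⟨j', i', _, rfl⟩ | ⟨j', i', s', _, _, rfl⟩ |
        ⟨i', s', _, rfl⟩ | ⟨i', _, rfl⟩ <;> simp [fact] at hhead
  -- define the total labelings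
  set μ' : V → Bool := fun v => decide (AtomC.labelV v true ∈ X) with hμ'def
  set σ' : V × V → Bool := fun e => decide (AtomC.labelE e.1 e.2 true ∈ X) with hσ'def
  have hμ'V : ∀ (v : V) (s : Bool), AtomC.labelV v s ∈ X → μ' v = s := by
    intro v s h
    cases s
    · have : AtomC.labelV v true ∉ X := fun ht => huniqV v ⟨ht, h⟩
      simp [hμ'def, this]
    · simp [hμ'def, h]
  have hσ'E : ∀ (u v : V) (s : Bool), AtomC.labelE u v s ∈ X → σ' (u, v) = s := by
    intro u v s h
    cases s
    · have : AtomC.labelE u v true ∉ X := fun ht => huniqE u v ⟨ht, h⟩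
      simp [hσ'def, this]
    · simp [hσ'def, h]
  refine ⟨σ', μ', ?_, ?_, ?_⟩
  · intro e s hs
    have := hlabE e.1 e.2 s (by rwa [show (e.1, e.2) = e from rfl])
    exact hσ'E e.1 e.2 s this
  · intro i s hs
    exact hμ'V i s (hlabV i s hs)
  · intro i _ hiI
    -- labelV i (μ' i) ∈ X
    have hlis : AtomC.labelV i (μ' i) ∈ X := by
      rcases hlabVor i with h | h
      · rwa [hμ'V i true h]
      · rwa [hμ'V i false h]
    -- the constraint forces receive or input
    have hrec : AtomC.receive i (μ' i) ∈ X ∨ AtomC.input i ∈ X := by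
      by_contra hcon
      push_neg at hcon
      have hneg : ({AtomC.receive i (μ' i), AtomC.input i} : Set (AtomC V)) ∩ X = ∅ := by
        ext a
        simp only [Set.mem_inter_iff, Set.mem_insert_iff, Set.mem_singleton_iff,
          Set.mem_empty_iff_false, iff_false, not_and]
        rintro (rfl | rfl)
        · exact hcon.1
        · exact hcon.2
      have h := hX.1 ⟨∅, {AtomC.labelV i (μ' i)}, ∅⟩
        ⟨⟨∅, {AtomC.labelV i (μ' i)}, {AtomC.receive i (μ' i), AtomC.input i}⟩,
          Or.inl (Or.inr (Or.inr (Or.inr (Or.inr (Or.inr (Or.inr ⟨i, μ' i, rfl⟩)))))),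
          hneg, rfl⟩
      obtain ⟨b, hb⟩ := h (by simp [hlis]) (by simp)
      exact hb.1
    have hrecv : AtomC.receive i (μ' i) ∈ X :=
      hrec.resolve_right fun h => hiI (hinput' i h)
    -- the receive atom must be supported by an edge rule
    by_contra hno
    push_neg at hno
    apply prune hX _ hrecv
    rintro r (hr | hr) hneg hpos hhead
    · rcases hr with ⟨v', rfl⟩ | ⟨u', v', _, rfl⟩ | ⟨v', s', rfl⟩ |
        ⟨u', v', s', _, rfl⟩ | ⟨u', v', s', hE', rfl⟩ |
        ⟨u', v', s', t', hE', hst, rfl⟩ | ⟨v', s', rfl⟩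
      · simp at hhead
      · simp at hhead
      · simp at hhead
      · simp at hhead
      · -- receive v' true rule
        simp only [Set.mem_singleton_iff, AtomC.receive.injEq] at hhead
        obtain ⟨rfl, hμi⟩ := hhead
        have h1 : AtomC.labelE u' i s' ∈ X := (hpos (by simp)).1
        have h2 : AtomC.labelV u' s' ∈ X := (hpos (by simp)).1
        exfalso
        apply hno u' hE'
        rw [hμi, hμ'V u' s' h2, hσ'E u' i s' h1]
        simp [signMul]
      · -- receive v' false rule
        simp only [Set.mem_singleton_iff, AtomC.receive.injEq] at hhead
        obtain ⟨rfl, hμi⟩ := hhead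
        have h1 : AtomC.labelE u' i s' ∈ X := (hpos (by simp)).1
        have h2 : AtomC.labelV u' t' ∈ X := (hpos (by simp)).1
        exfalso
        apply hno u' hE'
        rw [hμi, hμ'V u' t' h2, hσ'E u' i s' h1]
        cases s' <;> cases t' <;> simp_all [signMul]
      · simp at hhead
    · rcases hr with ⟨i', rfl⟩ | ⟨j', i', _, rfl⟩ | ⟨j', i', s', _, _, rfl⟩ |
        ⟨i', s', _, rfl⟩ | ⟨i', _, rfl⟩ <;> simp [fact] at hhead
end

section
/- Completeness of the consistency-checking encoding: Let (V,E,σ) be an influence graph with a designated set of input vertices and μ : V → {+,−} a partial vertex labeling. If (V,E,σ) and μ are consistent, then the disjunctive logic program P_C ∪ τ((V,E,σ),μ) has an answer set. -/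
/-- Completeness of the consistency-checking encoding: if `(V,E,σ)` and `μ` are
consistent, then `P_C ∪ τ((V,E,σ),μ)` has an answer set. -/
theorem consistency_completeness {V : Type} [Fintype V]
    (E : Set (V × V)) (σ : V × V → Option Bool) (μ : V → Option Bool) (I : Set V)
    (hσ : ∀ e, σ e ≠ none → e ∈ E)
    (hcons : Consistent E σ μ I) :
    ∃ X : Set (AtomC V), IsAnswerSet (PC E ∪ tauC E σ μ I) X := by
  classical
  obtain ⟨σ', μ', hσext, hμext, hwit⟩ := hcons
  set X : Set (AtomC V) := {a | match a with
    | .vertex _ => True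
    | .edge j i => (j, i) ∈ E
    | .observedE j i s => σ (j, i) = some s
    | .observedV i s => μ i = some s
    | .input i => i ∈ I
    | .labelV v s => s = μ' v
    | .labelE u v s => (u, v) ∈ E ∧ s = σ' (u, v)
    | .receive v b => ∃ u, (u, v) ∈ E ∧ b = (σ' (u, v) == μ' u)} with hXdef
  have memX : ∀ a : AtomC V, a ∈ X ↔ (match a with
    | .vertex _ => True
    | .edge j i => (j, i) ∈ E
    | .observedE j i s => σ (j, i) = some s
    | .observedV i s => μ i = some s
    | .input i => i ∈ I
    | .labelV v s => s = μ' v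
    | .labelE u v s => (u, v) ∈ E ∧ s = σ' (u, v)
    | .receive v b => ∃ u, (u, v) ∈ E ∧ b = (σ' (u, v) == μ' u)) := by
    intro a; rw [hXdef]; rfl
  refine ⟨X, ?_, ?_⟩
  · rintro r' ⟨r, hr, hneg, rfl⟩
    rcases hr with hr | hr
    · rcases hr with ⟨v, rfl⟩ | ⟨u, v, huv, rfl⟩ | ⟨v, s, rfl⟩ | ⟨u, v, s, huv, rfl⟩ |
        ⟨u, v, s, huv, rfl⟩ | ⟨u, v, s, t, huv, hst, rfl⟩ | ⟨v, s, rfl⟩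
      · intro _ _
        refine ⟨AtomC.labelV v (μ' v), ?_, (memX _).mpr rfl⟩
        cases μ' v
        · exact Or.inr rfl
        · exact Or.inl rfl
      · intro _ _
        refine ⟨AtomC.labelE u v (σ' (u, v)), ?_, (memX _).mpr ⟨huv, rfl⟩⟩
        cases σ' (u, v)
        · exact Or.inr rfl
        · exact Or.inl rfl
      · intro hpos _
        have h1 : μ v = some s := (memX _).mp (hpos rfl)
        refine ⟨AtomC.labelV v s, rfl, (memX _).mpr (hμext v s h1).symm⟩
      · intro hpos _
        have h1 : σ (u, v) = some s := (memX _).mp (hpos rfl)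
        refine ⟨AtomC.labelE u v s, rfl, (memX _).mpr ⟨huv, (hσext _ s h1).symm⟩⟩
      · intro hpos _
        have h1 : (u, v) ∈ E ∧ s = σ' (u, v) := (memX _).mp (hpos (Or.inl rfl))
        have h2 : s = μ' u := (memX _).mp (hpos (Or.inr rfl))
        refine ⟨AtomC.receive v true, rfl, (memX _).mpr ⟨u, huv, ?_⟩⟩
        rw [← h1.2, ← h2, beq_self_eq_true]
      · intro hpos _
        have h1 : (u, v) ∈ E ∧ s = σ' (u, v) := (memX _).mp (hpos (Or.inl rfl))
        have h2 : t = μ' u := (memX _).mp (hpos (Or.inr rfl))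
        refine ⟨AtomC.receive v false, rfl, (memX _).mpr ⟨u, huv, ?_⟩⟩
        rw [← h1.2, ← h2]
        exact (beq_eq_false_iff_ne.mpr hst).symm
      · intro hpos _
        exfalso
        have hs : s = μ' v := (memX _).mp (hpos rfl)
        have hne := Set.eq_empty_iff_forall_notMem.mp hneg
        have hvI : v ∉ I := fun hvI =>
          hne (AtomC.input v) ⟨Or.inr rfl, (memX _).mpr hvI⟩
        obtain ⟨j, hjv, hsign⟩ := hwit v trivial hvI
        refine hne (AtomC.receive v s) ⟨Or.inl rfl, (memX _).mpr ⟨j, hjv, ?_⟩⟩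
        rw [hs, hsign]
        unfold signMul
        exact Bool.beq_comm
    · rcases hr with ⟨i, rfl⟩ | ⟨j, i, hji, rfl⟩ | ⟨j, i, s, hji, hσs, rfl⟩ |
        ⟨i, s, hμs, rfl⟩ | ⟨i, hiI, rfl⟩
      · exact fun _ _ => ⟨AtomC.vertex i, rfl, (memX _).mpr trivial⟩
      · exact fun _ _ => ⟨AtomC.edge j i, rfl, (memX _).mpr hji⟩
      · exact fun _ _ => ⟨AtomC.observedE j i s, rfl, (memX _).mpr hσs⟩
      · exact fun _ _ => ⟨AtomC.observedV i s, rfl, (memX _).mpr hμs⟩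
      · exact fun _ _ => ⟨AtomC.input i, rfl, (memX _).mpr hiI⟩
  · intro Y hYX hYsat
    have huse : ∀ r ∈ PC E ∪ tauC E σ μ I, r.neg ∩ X = ∅ → r.pos ⊆ Y →
        (r.head ∩ Y).Nonempty := by
      intro r hr hneg hpos
      exact hYsat ⟨r.head, r.pos, ∅⟩ ⟨r, hr, hneg, rfl⟩ hpos (Set.empty_inter Y)
    have hsing : ∀ a : AtomC V, (({a} : Set (AtomC V)) ∩ Y).Nonempty → a ∈ Y := by
      rintro a ⟨b, hb1, hb2⟩
      rw [Set.mem_singleton_iff] at hb1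
      exact hb1 ▸ hb2
    have hv : ∀ i : V, AtomC.vertex i ∈ Y := fun i =>
      hsing _ (huse (fact (AtomC.vertex i)) (Or.inr (Or.inl ⟨i, rfl⟩))
        (Set.empty_inter X) (Set.empty_subset Y))
    have hedge : ∀ j i : V, (j, i) ∈ E → AtomC.edge j i ∈ Y := fun j i hji =>
      hsing _ (huse (fact (AtomC.edge j i)) (Or.inr (Or.inr (Or.inl ⟨j, i, hji, rfl⟩)))
        (Set.empty_inter X) (Set.empty_subset Y))
    have hobsE : ∀ j i s, σ (j, i) = some s → AtomC.observedE j i s ∈ Y := fun j i s hs =>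
      hsing _ (huse (fact (AtomC.observedE j i s))
        (Or.inr (Or.inr (Or.inr (Or.inl ⟨j, i, s, hσ (j, i) (by simp [hs]), hs, rfl⟩))))
        (Set.empty_inter X) (Set.empty_subset Y))
    have hobsV : ∀ i s, μ i = some s → AtomC.observedV i s ∈ Y := fun i s hs =>
      hsing _ (huse (fact (AtomC.observedV i s))
        (Or.inr (Or.inr (Or.inr (Or.inr (Or.inl ⟨i, s, hs, rfl⟩)))))
        (Set.empty_inter X) (Set.empty_subset Y))
    have hinput : ∀ i ∈ I, AtomC.input i ∈ Y := fun i hi =>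
      hsing _ (huse (fact (AtomC.input i))
        (Or.inr (Or.inr (Or.inr (Or.inr (Or.inr ⟨i, hi, rfl⟩)))))
        (Set.empty_inter X) (Set.empty_subset Y))
    have hlabV : ∀ v : V, AtomC.labelV v (μ' v) ∈ Y := by
      intro v
      obtain ⟨a, ha, haY⟩ := huse ⟨{AtomC.labelV v true, AtomC.labelV v false},
        {AtomC.vertex v}, ∅⟩ (Or.inl (Or.inl ⟨v, rfl⟩)) (Set.empty_inter X)
        (by rintro b rfl; exact hv v)
      rcases ha with rfl | ha
      · have := (memX _).mp (hYX haY)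
        rwa [← this]
      · rw [Set.mem_singleton_iff] at ha
        subst ha
        have := (memX _).mp (hYX haY)
        rwa [← this]
    have hlabE : ∀ u v : V, (u, v) ∈ E → AtomC.labelE u v (σ' (u, v)) ∈ Y := by
      intro u v huv
      obtain ⟨a, ha, haY⟩ := huse ⟨{AtomC.labelE u v true, AtomC.labelE u v false},
        {AtomC.edge u v}, ∅⟩ (Or.inl (Or.inr (Or.inl ⟨u, v, huv, rfl⟩)))
        (Set.empty_inter X) (by rintro b rfl; exact hedge u v huv)
      rcases ha with rfl | ha
      · have := (memX _).mp (hYX haY)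
        rwa [← this.2]
      · rw [Set.mem_singleton_iff] at ha
        subst ha
        have := (memX _).mp (hYX haY)
        rwa [← this.2]
    have hrecv : ∀ u v : V, (u, v) ∈ E →
        AtomC.receive v (σ' (u, v) == μ' u) ∈ Y := by
      intro u v huv
      cases hb : (σ' (u, v) == μ' u) with
      | true =>
        have heq : σ' (u, v) = μ' u := by rwa [beq_iff_eq] at hb
        refine hsing _ (huse ⟨{AtomC.receive v true},
          {AtomC.labelE u v (σ' (u, v)), AtomC.labelV u (σ' (u, v))}, ∅⟩
          (Or.inl (Or.inr (Or.inr (Or.inr (Or.inr (Or.inl ⟨u, v, σ' (u, v), huv, rfl⟩))))))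
          (Set.empty_inter X) ?_)
        rintro b (rfl | hb2)
        · exact hlabE u v huv
        · rw [Set.mem_singleton_iff] at hb2
          subst hb2
          rw [heq]
          exact hlabV u
      | false =>
        have hne : σ' (u, v) ≠ μ' u := beq_eq_false_iff_ne.mp hb
        refine hsing _ (huse ⟨{AtomC.receive v false},
          {AtomC.labelE u v (σ' (u, v)), AtomC.labelV u (μ' u)}, ∅⟩
          (Or.inl (Or.inr (Or.inr (Or.inr (Or.inr (Or.inr (Or.inl
            ⟨u, v, σ' (u, v), μ' u, huv, hne, rfl⟩)))))))
          (Set.empty_inter X) ?_)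
        rintro b (rfl | hb2)
        · exact hlabE u v huv
        · rw [Set.mem_singleton_iff] at hb2
          subst hb2
          exact hlabV u
    apply Set.Subset.antisymm hYX
    intro a ha
    have ha' := (memX a).mp ha
    match a with
    | .vertex i => exact hv i
    | .edge j i => exact hedge j i ha'
    | .observedE j i s => exact hobsE j i s ha'
    | .observedV i s => exact hobsV i s ha'
    | .input i => exact hinput i ha'
    | .labelV v s => rw [show s = μ' v from ha']; exact hlabV v
    | .labelE u v s => rw [show s = σ' (u, v) from ha'.2]; exact hlabE u v ha'.1
    | .receive v b =>
        obtain ⟨u, huv, rfl⟩ := ha'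
        exact hrecv u v huv
end

section
/- Soundness and completeness of the consistency-checking encoding: Let (V,E,σ) be an influence graph with a designated set of input vertices and μ : V → {+,−} a partial vertex labeling. Then (V,E,σ) and μ are consistent if and only if the disjunctive logic program P_C ∪ τ((V,E,σ),μ) has an answer set. -/
section ConsistencyAux

open AtomC

lemma head_nonempty {A : Type} {P : Set (Rule A)} {X Y : Set A}
    (hY : ∀ r ∈ reduct P X, RuleSat Y r)
    {r : Rule A} (hr : r ∈ P) (hneg : r.neg ∩ X = ∅) (hpos : r.pos ⊆ Y) :
    (r.head ∩ Y).Nonempty :=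
  hY ⟨r.head, r.pos, ∅⟩ ⟨r, hr, hneg, rfl⟩ hpos (Set.empty_inter Y)

lemma single_head {A : Type} {a : A} {Y : Set A}
    (h : (({a} : Set A) ∩ Y).Nonempty) : a ∈ Y := by
  obtain ⟨x, hx, hxY⟩ := h
  exact hx ▸ hxY

lemma supported {A : Type} {P : Set (Rule A)} {X : Set A} (hX : IsAnswerSet P X)
    {a : A} (ha : a ∈ X) :
    ∃ r ∈ P, r.neg ∩ X = ∅ ∧ r.pos ⊆ X \ {a} ∧ a ∈ r.head ∧ r.head ∩ X ⊆ {a} := by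
  by_contra hcon
  push_neg at hcon
  have hY : ∀ r' ∈ reduct P X, RuleSat (X \ {a}) r' := by
    rintro r' ⟨r, hrP, hneg, rfl⟩ hpos -
    obtain ⟨x, hxh, hxX⟩ := head_nonempty hX.1 hrP hneg (hpos.trans Set.diff_subset)
    by_cases hax : ∃ y ∈ r.head ∩ X, y ≠ a
    · obtain ⟨y, ⟨hyh, hyX⟩, hya⟩ := hax
      exact ⟨y, hyh, hyX, hya⟩
    · push_neg at hax
      have hsub : r.head ∩ X ⊆ {a} := fun y hy => hax y hy
      have hxa : x = a := hsub ⟨hxh, hxX⟩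
      exact absurd hsub (hcon r hrP hneg hpos (hxa ▸ hxh))
  have heq := hX.2 (X \ {a}) Set.diff_subset hY
  rw [← heq] at ha
  exact ha.2 rfl

variable {V : Type} {E : Set (V × V)} {σ : V × V → Option Bool}
  {μ : V → Option Bool} {I : Set V}

/-- The intended answer set determined by total labelings `σ'`, `μ'`. -/
def XC (E : Set (V × V)) (σ : V × V → Option Bool) (μ : V → Option Bool)
    (I : Set V) (σ' : V × V → Bool) (μ' : V → Bool) : Set (AtomC V) :=
  fun a => match a with
  | .vertex _ => True
  | .edge j i => (j, i) ∈ E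
  | .observedE j i s => (j, i) ∈ E ∧ σ (j, i) = some s
  | .observedV i s => μ i = some s
  | .input i => i ∈ I
  | .labelV v b => b = μ' v
  | .labelE u v b => (u, v) ∈ E ∧ b = σ' (u, v)
  | .receive v b => ∃ u, (u, v) ∈ E ∧ b = signMul (μ' u) (σ' (u, v))

lemma memU_lV2 (v : V) :
    (⟨{labelV v true, labelV v false}, {vertex v}, ∅⟩ : Rule (AtomC V)) ∈ PC E ∪ tauC E σ μ I :=
  Or.inl (Or.inl ⟨v, rfl⟩)

lemma memU_lE2 {u v : V} (h : (u, v) ∈ E) :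
    (⟨{labelE u v true, labelE u v false}, {edge u v}, ∅⟩ : Rule (AtomC V)) ∈ PC E ∪ tauC E σ μ I :=
  Or.inl (Or.inr (Or.inl ⟨u, v, h, rfl⟩))

lemma memU_lVobs (v : V) (s : Bool) :
    (⟨{labelV v s}, {observedV v s}, ∅⟩ : Rule (AtomC V)) ∈ PC E ∪ tauC E σ μ I :=
  Or.inl (Or.inr (Or.inr (Or.inl ⟨v, s, rfl⟩)))

lemma memU_lEobs {u v : V} (s : Bool) (h : (u, v) ∈ E) :
    (⟨{labelE u v s}, {observedE u v s}, ∅⟩ : Rule (AtomC V)) ∈ PC E ∪ tauC E σ μ I :=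
  Or.inl (Or.inr (Or.inr (Or.inr (Or.inl ⟨u, v, s, h, rfl⟩))))

lemma memU_recT {u v : V} (s : Bool) (h : (u, v) ∈ E) :
    (⟨{receive v true}, {labelE u v s, labelV u s}, ∅⟩ : Rule (AtomC V)) ∈ PC E ∪ tauC E σ μ I :=
  Or.inl (Or.inr (Or.inr (Or.inr (Or.inr (Or.inl ⟨u, v, s, h, rfl⟩)))))

lemma memU_recF {u v : V} {s t : Bool} (h : (u, v) ∈ E) (hst : s ≠ t) :
    (⟨{receive v false}, {labelE u v s, labelV u t}, ∅⟩ : Rule (AtomC V)) ∈ PC E ∪ tauC E σ μ I :=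
  Or.inl (Or.inr (Or.inr (Or.inr (Or.inr (Or.inr (Or.inl ⟨u, v, s, t, h, hst, rfl⟩))))))

lemma memU_constr (v : V) (s : Bool) :
    (⟨∅, {labelV v s}, {receive v s, input v}⟩ : Rule (AtomC V)) ∈ PC E ∪ tauC E σ μ I :=
  Or.inl (Or.inr (Or.inr (Or.inr (Or.inr (Or.inr (Or.inr ⟨v, s, rfl⟩))))))

lemma memU_vertex (i : V) : fact (vertex i) ∈ PC E ∪ tauC E σ μ I :=
  Or.inr (Or.inl ⟨i, rfl⟩)

lemma memU_edge {j i : V} (h : (j, i) ∈ E) : fact (edge j i) ∈ PC E ∪ tauC E σ μ I :=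
  Or.inr (Or.inr (Or.inl ⟨j, i, h, rfl⟩))

lemma memU_obsE {j i : V} {s : Bool} (h : (j, i) ∈ E) (hs : σ (j, i) = some s) :
    fact (observedE j i s) ∈ PC E ∪ tauC E σ μ I :=
  Or.inr (Or.inr (Or.inr (Or.inl ⟨j, i, s, h, hs, rfl⟩)))

lemma memU_obsV {i : V} {s : Bool} (hs : μ i = some s) :
    fact (observedV i s) ∈ PC E ∪ tauC E σ μ I :=
  Or.inr (Or.inr (Or.inr (Or.inr (Or.inl ⟨i, s, hs, rfl⟩))))

lemma memU_input {i : V} (hi : i ∈ I) : fact (input i) ∈ PC E ∪ tauC E σ μ I :=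
  Or.inr (Or.inr (Or.inr (Or.inr (Or.inr ⟨i, hi, rfl⟩))))

end ConsistencyAux

section Fwd
open AtomC
variable {V : Type} {E : Set (V × V)} {σ : V × V → Option Bool}
  {μ : V → Option Bool} {I : Set V}

lemma forward_dir (h : Consistent E σ μ I) :
    ∃ X, IsAnswerSet (PC E ∪ tauC E σ μ I) X := by
  obtain ⟨σ', μ', hσ', hμ', hwit⟩ := h
  refine ⟨XC E σ μ I σ' μ', ?_, ?_⟩
  · rintro r' ⟨r, hrP, hneg, rfl⟩ hpos -
    rcases hrP with hPC | hT
    · rcases hPC with ⟨v, rfl⟩ | ⟨u, v, huv, rfl⟩ | ⟨v, s, rfl⟩ | ⟨u, v, s, huv, rfl⟩ |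
        ⟨u, v, s, huv, rfl⟩ | ⟨u, v, s, t, huv, hst, rfl⟩ | ⟨v, s, rfl⟩
      · exact ⟨labelV v (μ' v), by cases μ' v <;> simp, rfl⟩
      · exact ⟨labelE u v (σ' (u, v)), by cases σ' (u, v) <;> simp, huv, rfl⟩
      · have hms : μ v = some s := hpos (Set.mem_singleton _)
        exact ⟨labelV v s, Set.mem_singleton _, (hμ' v s hms).symm⟩
      · have hms : (u, v) ∈ E ∧ σ (u, v) = some s := hpos (Set.mem_singleton _)
        exact ⟨labelE u v s, Set.mem_singleton _, huv, (hσ' _ s hms.2).symm⟩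
      · have h1 : (u, v) ∈ E ∧ s = σ' (u, v) := hpos (Set.mem_insert _ _)
        have h2 : s = μ' u := hpos (Set.mem_insert_of_mem _ (Set.mem_singleton _))
        refine ⟨receive v true, Set.mem_singleton _, u, huv, ?_⟩
        rw [← h1.2, ← h2]; simp [signMul]
      · have h1 : (u, v) ∈ E ∧ s = σ' (u, v) := hpos (Set.mem_insert _ _)
        have h2 : t = μ' u := hpos (Set.mem_insert_of_mem _ (Set.mem_singleton _))
        refine ⟨receive v false, Set.mem_singleton _, u, huv, ?_⟩
        rw [← h1.2, ← h2]
        cases s <;> cases t <;> simp_all [signMul]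
      · exfalso
        have hnr : receive v s ∉ XC E σ μ I σ' μ' :=
          fun hx => Set.eq_empty_iff_forall_notMem.mp hneg _ ⟨Set.mem_insert _ _, hx⟩
        have hni : input v ∉ XC E σ μ I σ' μ' :=
          fun hx => Set.eq_empty_iff_forall_notMem.mp hneg _
            ⟨Set.mem_insert_of_mem _ (Set.mem_singleton _), hx⟩
        have hs : s = μ' v := hpos (Set.mem_singleton _)
        obtain ⟨j, hj, hsign⟩ := hwit v (Set.mem_univ v) hni
        exact hnr ⟨j, hj, hs.trans hsign⟩
    · rcases hT with ⟨i, rfl⟩ | ⟨j, i, hji, rfl⟩ | ⟨j, i, s, hji, hs, rfl⟩ |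
        ⟨i, s, hs, rfl⟩ | ⟨i, hi, rfl⟩
      · exact ⟨vertex i, rfl, trivial⟩
      · exact ⟨edge j i, rfl, hji⟩
      · exact ⟨observedE j i s, rfl, hji, hs⟩
      · exact ⟨observedV i s, rfl, hs⟩
      · exact ⟨input i, rfl, hi⟩
  · intro Y hYX hYs
    have hvY : ∀ i : V, vertex i ∈ Y := fun i =>
      single_head (head_nonempty hYs (memU_vertex i) (Set.empty_inter _) (Set.empty_subset _))
    have hedY : ∀ j i : V, (j, i) ∈ E → edge j i ∈ Y := fun j i hh =>
      single_head (head_nonempty hYs (memU_edge hh) (Set.empty_inter _) (Set.empty_subset _))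
    have hoeY : ∀ j i s, (j, i) ∈ E → σ (j, i) = some s → observedE j i s ∈ Y := fun j i s hh hs =>
      single_head (head_nonempty hYs (memU_obsE hh hs) (Set.empty_inter _) (Set.empty_subset _))
    have hovY : ∀ i s, μ i = some s → observedV i s ∈ Y := fun i s hs =>
      single_head (head_nonempty hYs (memU_obsV hs) (Set.empty_inter _) (Set.empty_subset _))
    have hinY : ∀ i, i ∈ I → input i ∈ Y := fun i hi =>
      single_head (head_nonempty hYs (memU_input hi) (Set.empty_inter _) (Set.empty_subset _))
    have hlVY : ∀ v, labelV v (μ' v) ∈ Y := by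
      intro v
      obtain ⟨x, hxh, hxY⟩ := head_nonempty hYs (memU_lV2 v) (Set.empty_inter _)
        (Set.singleton_subset_iff.mpr (hvY v))
      rcases Set.mem_insert_iff.mp hxh with rfl | hxh
      · have hb : true = μ' v := hYX hxY
        rwa [← hb]
      · rw [Set.mem_singleton_iff.mp hxh] at hxY
        have hb : false = μ' v := hYX hxY
        rwa [← hb]
    have hlEY : ∀ u v, (u, v) ∈ E → labelE u v (σ' (u, v)) ∈ Y := by
      intro u v huv
      obtain ⟨x, hxh, hxY⟩ := head_nonempty hYs (memU_lE2 huv) (Set.empty_inter _)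
        (Set.singleton_subset_iff.mpr (hedY u v huv))
      rcases Set.mem_insert_iff.mp hxh with rfl | hxh
      · have hb : (u, v) ∈ E ∧ true = σ' (u, v) := hYX hxY
        rwa [← hb.2]
      · rw [Set.mem_singleton_iff.mp hxh] at hxY
        have hb : (u, v) ∈ E ∧ false = σ' (u, v) := hYX hxY
        rwa [← hb.2]
    have hrecY : ∀ v b, (∃ u, (u, v) ∈ E ∧ b = signMul (μ' u) (σ' (u, v))) → receive v b ∈ Y := by
      rintro v b ⟨u, huv, hb⟩
      by_cases hc : μ' u = σ' (u, v)
      · have hb' : b = true := by rw [hb, hc]; simp [signMul]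
        subst hb'
        refine single_head (head_nonempty hYs (memU_recT (σ' (u, v)) huv) (Set.empty_inter _) ?_)
        intro x hx
        rcases Set.mem_insert_iff.mp hx with rfl | hx
        · exact hlEY u v huv
        · rw [Set.mem_singleton_iff.mp hx, ← hc]
          exact hlVY u
      · have hb' : b = false := by
          rw [hb]; cases hμu : μ' u <;> cases hσu : σ' (u, v) <;> simp_all [signMul]
        subst hb'
        have hne : σ' (u, v) ≠ μ' u := fun hh => hc hh.symm
        refine single_head (head_nonempty hYs (memU_recF huv hne) (Set.empty_inter _) ?_)
        intro x hx
        rcases Set.mem_insert_iff.mp hx with rfl | hx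
        · exact hlEY u v huv
        · rw [Set.mem_singleton_iff.mp hx]
          exact hlVY u
    apply Set.Subset.antisymm hYX
    intro a ha
    cases a with
    | vertex i => exact hvY i
    | edge j i => exact hedY j i ha
    | observedE j i s => exact hoeY j i s ha.1 ha.2
    | observedV i s => exact hovY i s ha
    | input i => exact hinY i ha
    | labelV v b =>
        have hb : b = μ' v := ha
        rw [hb]; exact hlVY v
    | labelE u v b =>
        have hb : (u, v) ∈ E ∧ b = σ' (u, v) := ha
        rw [hb.2]; exact hlEY u v hb.1
    | receive v b => exact hrecY v b ha
end Fwd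

section Bwd
open AtomC
variable {V : Type} {E : Set (V × V)} {σ : V × V → Option Bool}
  {μ : V → Option Bool} {I : Set V}

lemma backward_dir (hσ : ∀ e, σ e ≠ none → e ∈ E)
    (h : ∃ X, IsAnswerSet (PC E ∪ tauC E σ μ I) X) : Consistent E σ μ I := by
  classical
  obtain ⟨X, hAS⟩ := h
  have hsat := hAS.1
  have hvX : ∀ i : V, vertex i ∈ X := fun i =>
    single_head (head_nonempty hsat (memU_vertex i) (Set.empty_inter _) (Set.empty_subset _))
  have hedX : ∀ j i : V, (j, i) ∈ E → edge j i ∈ X := fun j i hh =>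
    single_head (head_nonempty hsat (memU_edge hh) (Set.empty_inter _) (Set.empty_subset _))
  have hoeX : ∀ j i s, (j, i) ∈ E → σ (j, i) = some s → observedE j i s ∈ X := fun j i s hh hs =>
    single_head (head_nonempty hsat (memU_obsE hh hs) (Set.empty_inter _) (Set.empty_subset _))
  have hovX : ∀ i s, μ i = some s → observedV i s ∈ X := fun i s hs =>
    single_head (head_nonempty hsat (memU_obsV hs) (Set.empty_inter _) (Set.empty_subset _))
  have hinX : ∀ i, i ∈ I → input i ∈ X := fun i hi =>
    single_head (head_nonempty hsat (memU_input hi) (Set.empty_inter _) (Set.empty_subset _))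
  have hlVobs : ∀ v s, μ v = some s → labelV v s ∈ X := fun v s hs =>
    single_head (head_nonempty hsat (memU_lVobs v s) (Set.empty_inter _)
      (Set.singleton_subset_iff.mpr (hovX v s hs)))
  have hlEobs : ∀ u v s, σ (u, v) = some s → labelE u v s ∈ X := by
    intro u v s hs
    have he : (u, v) ∈ E := hσ _ (by simp [hs])
    exact single_head (head_nonempty hsat (memU_lEobs s he) (Set.empty_inter _)
      (Set.singleton_subset_iff.mpr (hoeX u v s he hs)))
  have hlV_ex : ∀ v, ∃ b, labelV v b ∈ X := by
    intro v
    obtain ⟨x, hxh, hxX⟩ := head_nonempty hsat (memU_lV2 v) (Set.empty_inter _)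
      (Set.singleton_subset_iff.mpr (hvX v))
    rcases Set.mem_insert_iff.mp hxh with rfl | hxh
    · exact ⟨true, hxX⟩
    · rw [Set.mem_singleton_iff.mp hxh] at hxX; exact ⟨false, hxX⟩
  -- supported-based lemmas
  have hinp : ∀ v, input v ∈ X → v ∈ I := by
    intro v hv
    obtain ⟨r, hrP, hneg, hpos, hhead, hmax⟩ := supported hAS hv
    rcases hrP with hPC | hT
    · rcases hPC with ⟨v', rfl⟩ | ⟨u', v', h', rfl⟩ | ⟨v', s, rfl⟩ | ⟨u', v', s, h', rfl⟩ |
        ⟨u', v', s, h', rfl⟩ | ⟨u', v', s, t, h', hst, rfl⟩ | ⟨v', s, rfl⟩ <;>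
        simp [fact] at hhead
    · rcases hT with ⟨i, rfl⟩ | ⟨j, i, hji, rfl⟩ | ⟨j, i, s, hji, hs, rfl⟩ |
        ⟨i, s, hs, rfl⟩ | ⟨i, hi, rfl⟩
      · simp [fact] at hhead
      · simp [fact] at hhead
      · simp [fact] at hhead
      · simp [fact] at hhead
      · simp only [fact, Set.mem_singleton_iff, AtomC.input.injEq] at hhead
        subst hhead
        exact hi
  have hov : ∀ v s, observedV v s ∈ X → μ v = some s := by
    intro v s hvs
    obtain ⟨r, hrP, hneg, hpos, hhead, hmax⟩ := supported hAS hvs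
    rcases hrP with hPC | hT
    · rcases hPC with ⟨v', rfl⟩ | ⟨u', v', h', rfl⟩ | ⟨v', s', rfl⟩ | ⟨u', v', s', h', rfl⟩ |
        ⟨u', v', s', h', rfl⟩ | ⟨u', v', s', t, h', hst, rfl⟩ | ⟨v', s', rfl⟩ <;>
        simp [fact] at hhead
    · rcases hT with ⟨i, rfl⟩ | ⟨j, i, hji, rfl⟩ | ⟨j, i, s', hji, hs', rfl⟩ |
        ⟨i, s', hs', rfl⟩ | ⟨i, hi, rfl⟩
      · simp [fact] at hhead
      · simp [fact] at hhead
      · simp [fact] at hhead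
      · simp only [fact, Set.mem_singleton_iff, AtomC.observedV.injEq] at hhead
        obtain ⟨rfl, rfl⟩ := hhead
        exact hs'
      · simp [fact] at hhead
  have hoe : ∀ u v s, observedE u v s ∈ X → σ (u, v) = some s := by
    intro u v s hvs
    obtain ⟨r, hrP, hneg, hpos, hhead, hmax⟩ := supported hAS hvs
    rcases hrP with hPC | hT
    · rcases hPC with ⟨v', rfl⟩ | ⟨u', v', h', rfl⟩ | ⟨v', s', rfl⟩ | ⟨u', v', s', h', rfl⟩ |
        ⟨u', v', s', h', rfl⟩ | ⟨u', v', s', t, h', hst, rfl⟩ | ⟨v', s', rfl⟩ <;>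
        simp [fact] at hhead
    · rcases hT with ⟨i, rfl⟩ | ⟨j, i, hji, rfl⟩ | ⟨j, i, s', hji, hs', rfl⟩ |
        ⟨i, s', hs', rfl⟩ | ⟨i, hi, rfl⟩
      · simp [fact] at hhead
      · simp [fact] at hhead
      · simp only [fact, Set.mem_singleton_iff, AtomC.observedE.injEq] at hhead
        obtain ⟨rfl, rfl, rfl⟩ := hhead
        exact hs'
      · simp [fact] at hhead
      · simp [fact] at hhead
  have hlVu : ∀ v b c, labelV v b ∈ X → labelV v c ∈ X → b = c := by
    have key : ∀ v (d : Bool), μ v ≠ some d → labelV v d ∈ X → labelV v (!d) ∈ X → False := by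
      intro v d hd hdX hdX'
      obtain ⟨r, hrP, hneg, hpos, hhead, hmax⟩ := supported hAS hdX
      rcases hrP with hPC | hT
      · rcases hPC with ⟨v', rfl⟩ | ⟨u', v', h', rfl⟩ | ⟨v', s, rfl⟩ | ⟨u', v', s, h', rfl⟩ |
          ⟨u', v', s, h', rfl⟩ | ⟨u', v', s, t, h', hst, rfl⟩ | ⟨v', s, rfl⟩
        · simp only [Set.mem_insert_iff, Set.mem_singleton_iff, AtomC.labelV.injEq] at hhead
          obtain ⟨rfl, -⟩ | ⟨rfl, -⟩ := hhead <;>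
          · have hmem : labelV v (!d) ∈ ({labelV v true, labelV v false} : Set (AtomC V)) := by
              cases d <;> simp
            have := hmax ⟨hmem, hdX'⟩
            simp only [Set.mem_singleton_iff, AtomC.labelV.injEq] at this
            exact absurd this.2 (by cases d <;> simp)
        · simp at hhead
        · simp only [Set.mem_singleton_iff, AtomC.labelV.injEq] at hhead
          obtain ⟨rfl, rfl⟩ := hhead
          have hobs : observedV v d ∈ X := (hpos (Set.mem_singleton _)).1
          exact hd (hov v d hobs)
        · simp at hhead
        · simp at hhead
        · simp at hhead
        · simp at hhead
      · rcases hT with ⟨i, rfl⟩ | ⟨j, i, hji, rfl⟩ | ⟨j, i, s', hji, hs', rfl⟩ |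
          ⟨i, s', hs', rfl⟩ | ⟨i, hi, rfl⟩ <;> simp [fact] at hhead
    intro v b c hb hc
    by_contra hbc
    have hpair : labelV v true ∈ X ∧ labelV v false ∈ X := by
      cases b <;> cases c
      · exact absurd rfl hbc
      · exact ⟨hc, hb⟩
      · exact ⟨hb, hc⟩
      · exact absurd rfl hbc
    have hTX := hpair.1
    have hFX := hpair.2
    by_cases hmt : μ v = some true
    · exact key v false (by simp [hmt]) hFX hTX
    · exact key v true hmt hTX hFX
  have hlEu : ∀ u v b c, labelE u v b ∈ X → labelE u v c ∈ X → b = c := by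
    have key : ∀ u v (d : Bool), σ (u, v) ≠ some d →
        labelE u v d ∈ X → labelE u v (!d) ∈ X → False := by
      intro u v d hd hdX hdX'
      obtain ⟨r, hrP, hneg, hpos, hhead, hmax⟩ := supported hAS hdX
      rcases hrP with hPC | hT
      · rcases hPC with ⟨v', rfl⟩ | ⟨u', v', h', rfl⟩ | ⟨v', s, rfl⟩ | ⟨u', v', s, h', rfl⟩ |
          ⟨u', v', s, h', rfl⟩ | ⟨u', v', s, t, h', hst, rfl⟩ | ⟨v', s, rfl⟩
        · simp at hhead
        · simp only [Set.mem_insert_iff, Set.mem_singleton_iff, AtomC.labelE.injEq] at hhead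
          obtain ⟨rfl, rfl, -⟩ | ⟨rfl, rfl, -⟩ := hhead <;>
          · have hmem : labelE u v (!d) ∈
                ({labelE u v true, labelE u v false} : Set (AtomC V)) := by
              cases d <;> simp
            have := hmax ⟨hmem, hdX'⟩
            simp only [Set.mem_singleton_iff, AtomC.labelE.injEq] at this
            exact absurd this.2.2 (by cases d <;> simp)
        · simp at hhead
        · simp only [Set.mem_singleton_iff, AtomC.labelE.injEq] at hhead
          obtain ⟨rfl, rfl, rfl⟩ := hhead
          have hobs : observedE u v d ∈ X := (hpos (Set.mem_singleton _)).1
          exact hd (hoe u v d hobs)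
        · simp at hhead
        · simp at hhead
        · simp at hhead
      · rcases hT with ⟨i, rfl⟩ | ⟨j, i, hji, rfl⟩ | ⟨j, i, s', hji, hs', rfl⟩ |
          ⟨i, s', hs', rfl⟩ | ⟨i, hi, rfl⟩ <;> simp [fact] at hhead
    intro u v b c hb hc
    by_contra hbc
    have hpair : labelE u v true ∈ X ∧ labelE u v false ∈ X := by
      cases b <;> cases c
      · exact absurd rfl hbc
      · exact ⟨hc, hb⟩
      · exact ⟨hb, hc⟩
      · exact absurd rfl hbc
    have hTX := hpair.1
    have hFX := hpair.2
    by_cases hmt : σ (u, v) = some true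
    · exact key u v false (by simp [hmt]) hFX hTX
    · exact key u v true hmt hTX hFX
  have hrec : ∀ v b, receive v b ∈ X →
      ∃ u s t, (u, v) ∈ E ∧ labelE u v s ∈ X ∧ labelV u t ∈ X ∧ b = (s == t) := by
    intro v b hb
    obtain ⟨r, hrP, hneg, hpos, hhead, hmax⟩ := supported hAS hb
    rcases hrP with hPC | hT
    · rcases hPC with ⟨v', rfl⟩ | ⟨u', v', h', rfl⟩ | ⟨v', s, rfl⟩ | ⟨u', v', s, h', rfl⟩ |
        ⟨u', v', s, h', rfl⟩ | ⟨u', v', s, t, h', hst, rfl⟩ | ⟨v', s, rfl⟩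
      · simp at hhead
      · simp at hhead
      · simp at hhead
      · simp at hhead
      · simp only [Set.mem_singleton_iff, AtomC.receive.injEq] at hhead
        obtain ⟨rfl, rfl⟩ := hhead
        have h1 : labelE u' v s ∈ X := (hpos (Set.mem_insert _ _)).1
        have h2 : labelV u' s ∈ X :=
          (hpos (Set.mem_insert_of_mem _ (Set.mem_singleton _))).1
        exact ⟨u', s, s, h', h1, h2, by simp⟩
      · simp only [Set.mem_singleton_iff, AtomC.receive.injEq] at hhead
        obtain ⟨rfl, rfl⟩ := hhead
        have h1 : labelE u' v s ∈ X := (hpos (Set.mem_insert _ _)).1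
        have h2 : labelV u' t ∈ X :=
          (hpos (Set.mem_insert_of_mem _ (Set.mem_singleton _))).1
        refine ⟨u', s, t, h', h1, h2, ?_⟩
        cases s <;> cases t
        · exact absurd rfl hst
        · rfl
        · rfl
        · exact absurd rfl hst
      · simp at hhead
    · rcases hT with ⟨i, rfl⟩ | ⟨j, i, hji, rfl⟩ | ⟨j, i, s', hji, hs', rfl⟩ |
        ⟨i, s', hs', rfl⟩ | ⟨i, hi, rfl⟩ <;> simp [fact] at hhead
  -- assemble witnessing labelings
  refine ⟨fun e => if hex : ∃ b, labelE e.1 e.2 b ∈ X then hex.choose else true,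
    fun v => (hlV_ex v).choose, ?_, ?_, ?_⟩
  · intro e s hs
    have h1 : labelE e.1 e.2 s ∈ X := hlEobs e.1 e.2 s hs
    have hex : ∃ b, labelE e.1 e.2 b ∈ X := ⟨s, h1⟩
    show (if hx : ∃ b, labelE e.1 e.2 b ∈ X then hx.choose else true) = s
    rw [dif_pos hex]
    exact hlEu e.1 e.2 _ s hex.choose_spec h1
  · intro i s hs
    exact hlVu i _ s (hlV_ex i).choose_spec (hlVobs i s hs)
  · intro i _ hiI
    have hnin : input i ∉ X := fun hx => hiI (hinp i hx)
    have hrecX : receive i ((hlV_ex i).choose) ∈ X := by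
      by_contra hnr
      have hne : ({receive i ((hlV_ex i).choose), input i} : Set (AtomC V)) ∩ X = ∅ := by
        apply Set.eq_empty_iff_forall_notMem.mpr
        rintro x ⟨hx1, hx2⟩
        rcases Set.mem_insert_iff.mp hx1 with rfl | hx1
        · exact hnr hx2
        · rw [Set.mem_singleton_iff.mp hx1] at hx2; exact hnin hx2
      have := head_nonempty hsat (memU_constr i ((hlV_ex i).choose)) hne
        (Set.singleton_subset_iff.mpr (hlV_ex i).choose_spec)
      simp at this
    obtain ⟨u, s, t, huv, hsE, htV, hbt⟩ := hrec i ((hlV_ex i).choose) hrecX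
    refine ⟨u, huv, ?_⟩
    have hex : ∃ b, labelE u i b ∈ X := ⟨s, hsE⟩
    have h2 : (hlV_ex u).choose = t := hlVu u _ t (hlV_ex u).choose_spec htV
    show (hlV_ex i).choose =
      signMul ((hlV_ex u).choose) (if hx : ∃ b, labelE u i b ∈ X then hx.choose else true)
    rw [dif_pos hex]
    have h3 : hex.choose = s := hlEu u i _ s hex.choose_spec hsE
    rw [hbt, h2, h3]
    cases s <;> cases t <;> rfl
end Bwd

/-- Soundness and completeness of the consistency-checking encoding:
`(V,E,σ)` and `μ` are consistent iff `P_C ∪ τ((V,E,σ),μ)` has an answer set. -/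
theorem consistency_iff_answer_set {V : Type} [Fintype V]
    (E : Set (V × V)) (σ : V × V → Option Bool) (μ : V → Option Bool) (I : Set V)
    (hσ : ∀ e, σ e ≠ none → e ∈ E) :
    Consistent E σ μ I ↔ ∃ X : Set (AtomC V), IsAnswerSet (PC E ∪ tauC E σ μ I) X := by
  exact ⟨fun h => forward_dir h, fun h => backward_dir hσ h⟩
end

section
/- Soundness of the MIC-extraction encoding: Let (V,E,σ) be an influence graph with a designated set of input vertices and μ : V → {+,−} a partial vertex labeling. If X is an answer set of the disjunctive logic program P_D ∪ τ((V,E,σ),μ), then the set { i ∈ V | active(i) ∈ X } is a Minimal Inconsistent Core. -/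
/-- `W` is a Minimal Inconsistent Core: there are no witnessing labelings for `W`,
but every proper subset of `W` has witnessing labelings. -/
def IsMIC {V : Type} (E : Set (V × V)) (σ : V × V → Option Bool)
    (μ : V → Option Bool) (I : Set V) (W : Set V) : Prop :=
  (¬ ∃ σ' μ', Witnessing E σ μ I W σ' μ') ∧
  (∀ W', W' ⊂ W → ∃ σ' μ', Witnessing E σ μ I W' σ' μ')

/-- Ground atoms of the MIC-extraction encoding. -/
inductive AtomD (V : Type) : Type
  | vertex : V → AtomD V
  | edge : V → V → AtomD V
  | observedE : V → V → Bool → AtomD V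
  | observedV : V → Bool → AtomD V
  | input : V → AtomD V
  | labelV : V → Bool → AtomD V
  | labelE : V → V → Bool → AtomD V
  | active : V → AtomD V
  | inactive : V → AtomD V
  | edgeMIC : V → V → AtomD V
  | vertexMIC : V → AtomD V
  | opposite : V → V → AtomD V
  | bottom : AtomD V
  | labelV' : V → V → Bool → AtomD V
  | labelE' : V → V → V → Bool → AtomD V
  | receive' : V → V → Bool → AtomD V

/-- The instance translation `τ((V,E,σ),μ)`: facts describing the influence graph,
the partial labelings, and the input vertices. -/
def tauD {V : Type} (E : Set (V × V)) (σ : V × V → Option Bool)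
    (μ : V → Option Bool) (I : Set V) : Set (Rule (AtomD V)) :=
  {r | (∃ i : V, r = fact (AtomD.vertex i)) ∨
       (∃ j i, (j, i) ∈ E ∧ r = fact (AtomD.edge j i)) ∨
       (∃ j i s, (j, i) ∈ E ∧ σ (j, i) = some s ∧ r = fact (AtomD.observedE j i s)) ∨
       (∃ i s, μ i = some s ∧ r = fact (AtomD.observedV i s)) ∨
       (∃ i ∈ I, r = fact (AtomD.input i))}

/-- The MIC-extraction program `P_D` (ground instantiation over all vertices,
edges, and signs). -/
def PD {V : Type} (E : Set (V × V)) : Set (Rule (AtomD V)) :=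
  {r | (∃ v s, r = ⟨{AtomD.labelV v s}, {AtomD.observedV v s}, ∅⟩) ∨
       (∃ u v s, (u, v) ∈ E ∧ r = ⟨{AtomD.labelE u v s}, {AtomD.observedE u v s}, ∅⟩) ∨
       (∃ v : V, r = ⟨{AtomD.active v, AtomD.inactive v},
          {AtomD.vertex v}, {AtomD.input v}⟩) ∨
       (∃ u v, (u, v) ∈ E ∧ r = ⟨{AtomD.edgeMIC u v},
          {AtomD.edge u v, AtomD.active v}, ∅⟩) ∨
       (∃ u v, (u, v) ∈ E ∧ r = ⟨{AtomD.vertexMIC u}, {AtomD.edgeMIC u v}, ∅⟩) ∨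
       (∃ v : V, r = ⟨{AtomD.vertexMIC v}, {AtomD.active v}, ∅⟩) ∨
       (∃ v : V, r = ⟨{AtomD.labelV v true, AtomD.labelV v false},
          {AtomD.vertexMIC v}, ∅⟩) ∨
       (∃ u v, (u, v) ∈ E ∧ r = ⟨{AtomD.labelE u v true, AtomD.labelE u v false},
          {AtomD.edgeMIC u v}, ∅⟩) ∨
       (∃ u v s, (u, v) ∈ E ∧ r = ⟨{AtomD.opposite u v},
          {AtomD.labelE u v false, AtomD.labelV u s, AtomD.labelV v s}, ∅⟩) ∨
       (∃ u v s t, (u, v) ∈ E ∧ s ≠ t ∧ r = ⟨{AtomD.opposite u v},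
          {AtomD.labelE u v true, AtomD.labelV u s, AtomD.labelV v t}, ∅⟩) ∨
       (∃ v : V, r = ⟨{AtomD.bottom},
          insert (AtomD.active v) {a | ∃ u, (u, v) ∈ E ∧ a = AtomD.opposite u v}, ∅⟩) ∨
       (r = ⟨∅, ∅, {AtomD.bottom}⟩) ∨
       (∃ v s, r = ⟨{AtomD.labelV v s}, {AtomD.bottom, AtomD.vertex v}, ∅⟩) ∨
       (∃ u v s, (u, v) ∈ E ∧ r = ⟨{AtomD.labelE u v s},
          {AtomD.bottom, AtomD.edge u v}, ∅⟩) ∨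
       (∃ w v : V, r = ⟨{AtomD.labelV' w v true, AtomD.labelV' w v false},
          {AtomD.active w, AtomD.vertexMIC v}, ∅⟩) ∨
       (∃ w u v, (u, v) ∈ E ∧ r = ⟨{AtomD.labelE' w u v true, AtomD.labelE' w u v false},
          {AtomD.active w, AtomD.edgeMIC u v}, ∅⟩) ∨
       (∃ w v s, r = ⟨{AtomD.labelV' w v s}, {AtomD.active w, AtomD.observedV v s}, ∅⟩) ∨
       (∃ w u v s, (u, v) ∈ E ∧ r = ⟨{AtomD.labelE' w u v s},
          {AtomD.active w, AtomD.observedE u v s}, ∅⟩) ∨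
       (∃ w u v s, (u, v) ∈ E ∧ v ≠ w ∧ r = ⟨{AtomD.receive' w v true},
          {AtomD.labelE' w u v s, AtomD.labelV' w u s}, ∅⟩) ∨
       (∃ w u v s t, (u, v) ∈ E ∧ v ≠ w ∧ s ≠ t ∧ r = ⟨{AtomD.receive' w v false},
          {AtomD.labelE' w u v s, AtomD.labelV' w u t}, ∅⟩) ∨
       (∃ w v s, v ≠ w ∧ r = ⟨∅, {AtomD.labelV' w v s, AtomD.active v},
          {AtomD.receive' w v s}⟩)}

/-!
Inconsistency: if `σ'`, `μ'` witnessed the active vertices of an answer set `X`, deleting from `X`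
the atom `bottom` and every `labelV`, `labelE`, `opposite` atom made false by `σ'`, `μ'` would
leave a model of the reduct, because `bottom` is derivable only from an active vertex all of whose
incoming edges are `opposite`; this contradicts the minimality of `X`. The only delicate rules are
the disjunctive guesses of labels, and they stay satisfied because `bottom ∈ X` forces every
`labelV` and `labelE` atom into `X`.

Minimality: for an active `w`, each primed atom `labelV' w v _`, `labelE' w u v _` in `X` is either
the only one of its pair chosen or forced by an observation, so these atoms define labelings, and
the constraint on `receive'` forces every active `v ≠ w` to receive its label along some edge.
These labelings therefore witness the active vertices other than `w`.
-/

theorem Witnessing.mono {V : Type} {E : Set (V × V)} {σ : V × V → Option Bool}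
    {μ : V → Option Bool} {I W W' : Set V} {σ' : V × V → Bool} {μ' : V → Bool}
    (h : Witnessing E σ μ I W σ' μ') (hW : W' ⊆ W) : Witnessing E σ μ I W' σ' μ' :=
  ⟨h.1, h.2.1, fun i hi => h.2.2 i (hW hi)⟩

theorem Bool.eq_of_forall_not_not_or_eq_some {p : Bool → Prop} {c : Option Bool}
    (h : ∀ s, p s → ¬ p (!s) ∨ c = some s) {s t : Bool} (hs : p s) (ht : p t) : s = t := by
  by_contra hst
  obtain rfl : t = !s := by cases s <;> cases t <;> simp_all
  rcases h s hs with hn | rfl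
  · exact hn ht
  · rcases h _ ht with hn | hc
    · exact hn (by simpa using hs)
    · simp at hc

namespace IsAnswerSet

variable {A : Type} {P : Set (Rule A)} {X : Set A}

theorem ruleSat (hX : IsAnswerSet P X) {r : Rule A} (hr : r ∈ P) (hneg : r.neg ∩ X = ∅)
    (hpos : r.pos ⊆ X) : (r.head ∩ X).Nonempty :=
  hX.1 ⟨r.head, r.pos, ∅⟩ ⟨r, hr, hneg, rfl⟩ hpos (Set.empty_inter X)

theorem mem_of_head_eq_singleton (hX : IsAnswerSet P X) {r : Rule A} {a : A} (hr : r ∈ P)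
    (hhead : r.head = {a}) (hneg : r.neg ∩ X = ∅) (hpos : r.pos ⊆ X) : a ∈ X := by
  obtain ⟨b, hb, hbX⟩ := hX.ruleSat hr hneg hpos
  rw [hhead, Set.mem_singleton_iff] at hb
  exact hb ▸ hbX

theorem mem_of_fact_mem (hX : IsAnswerSet P X) {a : A} (h : fact a ∈ P) : a ∈ X :=
  hX.mem_of_head_eq_singleton h rfl (Set.empty_inter X) (Set.empty_subset X)

theorem not_pos_subset_of_head_eq_empty (hX : IsAnswerSet P X) {r : Rule A} (hr : r ∈ P)
    (hhead : r.head = ∅) (hneg : r.neg ∩ X = ∅) : ¬ r.pos ⊆ X := fun hpos => by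
  simpa [hhead] using hX.ruleSat hr hneg hpos

theorem exists_support (hX : IsAnswerSet P X) {a : A} (ha : a ∈ X) :
    ∃ r ∈ P, a ∈ r.head ∧ r.pos ⊆ X ∧ r.neg ∩ X = ∅ ∧ r.head ∩ X ⊆ {a} := by
  by_contra! hns
  suffices X \ {a} = X from (this.symm ▸ ha : a ∈ X \ {a}).2 rfl
  refine hX.2 _ Set.sdiff_subset ?_
  rintro _ ⟨r, hr, hneg, rfl⟩ hpos -
  have hposX : r.pos ⊆ X := hpos.trans Set.sdiff_subset
  by_cases haH : a ∈ r.head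
  · obtain ⟨b, ⟨hbH, hbX⟩, hba⟩ := Set.not_subset.mp (hns r hr haH hposX hneg)
    exact ⟨b, hbH, hbX, hba⟩
  · obtain ⟨b, hbH, hbX⟩ := hX.ruleSat hr hneg hposX
    exact ⟨b, hbH, hbX, fun hba => haH (hba ▸ hbH)⟩

end IsAnswerSet

namespace PD

variable {V : Type} {E : Set (V × V)} {σ : V × V → Option Bool}
  {μ : V → Option Bool} {I : Set V} {r : Rule (AtomD V)}

theorem observedV_mem_head (hr : r ∈ PD E ∪ tauD E σ μ I) {v : V} {s : Bool}
    (ha : AtomD.observedV v s ∈ r.head) : μ v = some s := by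
  simp only [Set.mem_union, PD, tauD, Set.mem_ofPred_eq] at hr
  aesop (add norm fact)

theorem observedE_mem_head (hr : r ∈ PD E ∪ tauD E σ μ I) {u v : V} {s : Bool}
    (ha : AtomD.observedE u v s ∈ r.head) : σ (u, v) = some s := by
  simp only [Set.mem_union, PD, tauD, Set.mem_ofPred_eq] at hr
  aesop (add norm fact)

theorem active_mem_head (hr : r ∈ PD E ∪ tauD E σ μ I) {v : V}
    (ha : AtomD.active v ∈ r.head) : AtomD.input v ∈ r.neg := by
  simp only [Set.mem_union, PD, tauD, Set.mem_ofPred_eq] at hr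
  aesop (add norm fact)

theorem labelV'_mem_head (hr : r ∈ PD E ∪ tauD E σ μ I) {w v : V} {s : Bool}
    (ha : AtomD.labelV' w v s ∈ r.head) :
    AtomD.labelV' w v (!s) ∈ r.head ∨ AtomD.observedV v s ∈ r.pos := by
  simp only [Set.mem_union, PD, tauD, Set.mem_ofPred_eq] at hr
  aesop (add norm fact)

theorem labelE'_mem_head (hr : r ∈ PD E ∪ tauD E σ μ I) {w u v : V} {s : Bool}
    (ha : AtomD.labelE' w u v s ∈ r.head) :
    AtomD.labelE' w u v (!s) ∈ r.head ∨ AtomD.observedE u v s ∈ r.pos := by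
  simp only [Set.mem_union, PD, tauD, Set.mem_ofPred_eq] at hr
  aesop (add norm fact)

theorem receive'_mem_head (hr : r ∈ PD E ∪ tauD E σ μ I) {w v : V} {s : Bool}
    (ha : AtomD.receive' w v s ∈ r.head) :
    ∃ u t t', (u, v) ∈ E ∧ signMul t' t = s ∧
      AtomD.labelE' w u v t ∈ r.pos ∧ AtomD.labelV' w u t' ∈ r.pos := by
  simp only [Set.mem_union, PD, tauD, Set.mem_ofPred_eq] at hr
  aesop (add norm fact, norm signMul)

theorem bottom_mem_head (hr : r ∈ PD E ∪ tauD E σ μ I) (ha : AtomD.bottom ∈ r.head) :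
    ∃ v, AtomD.active v ∈ r.pos ∧ ∀ u, (u, v) ∈ E → AtomD.opposite u v ∈ r.pos := by
  simp only [Set.mem_union, PD, tauD, Set.mem_ofPred_eq] at hr
  aesop (add norm fact)

theorem labelV_mem_head (hr : r ∈ PD E ∪ tauD E σ μ I) {v : V} {s : Bool}
    (ha : AtomD.labelV v s ∈ r.head) :
    AtomD.observedV v s ∈ r.pos ∨ (∀ t, AtomD.labelV v t ∈ r.head) ∨ AtomD.bottom ∈ r.pos := by
  simp only [Set.mem_union, PD, tauD, Set.mem_ofPred_eq] at hr
  aesop (add norm fact)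

theorem labelE_mem_head (hr : r ∈ PD E ∪ tauD E σ μ I) {u v : V} {s : Bool}
    (ha : AtomD.labelE u v s ∈ r.head) :
    (u, v) ∈ E ∧ (AtomD.observedE u v s ∈ r.pos ∨ (∀ t, AtomD.labelE u v t ∈ r.head) ∨
      AtomD.bottom ∈ r.pos) := by
  simp only [Set.mem_union, PD, tauD, Set.mem_ofPred_eq] at hr
  aesop (add norm fact)

theorem opposite_mem_head (hr : r ∈ PD E ∪ tauD E σ μ I) {u v : V}
    (ha : AtomD.opposite u v ∈ r.head) :
    ∃ t s s', signMul s t ≠ s' ∧ AtomD.labelE u v t ∈ r.pos ∧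
      AtomD.labelV u s ∈ r.pos ∧ AtomD.labelV v s' ∈ r.pos := by
  simp only [Set.mem_union, PD, tauD, Set.mem_ofPred_eq] at hr
  aesop (add norm fact, norm signMul)

variable {X : Set (AtomD V)}

theorem vertex_mem (hX : IsAnswerSet (PD E ∪ tauD E σ μ I) X) (v : V) : AtomD.vertex v ∈ X :=
  hX.mem_of_fact_mem (Or.inr (by unfold tauD; grind))

theorem edge_mem (hX : IsAnswerSet (PD E ∪ tauD E σ μ I) X) {u v : V} (hE : (u, v) ∈ E) :
    AtomD.edge u v ∈ X :=
  hX.mem_of_fact_mem (Or.inr (by unfold tauD; grind))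

theorem observedV_mem (hX : IsAnswerSet (PD E ∪ tauD E σ μ I) X) {v : V} {s : Bool}
    (hs : μ v = some s) : AtomD.observedV v s ∈ X :=
  hX.mem_of_fact_mem (Or.inr (by unfold tauD; grind))

theorem observedE_mem (hX : IsAnswerSet (PD E ∪ tauD E σ μ I) X) {u v : V} {s : Bool}
    (hE : (u, v) ∈ E) (hs : σ (u, v) = some s) : AtomD.observedE u v s ∈ X :=
  hX.mem_of_fact_mem (Or.inr (by unfold tauD; grind))

theorem input_mem (hX : IsAnswerSet (PD E ∪ tauD E σ μ I) X) {v : V} (hv : v ∈ I) :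
    AtomD.input v ∈ X :=
  hX.mem_of_fact_mem (Or.inr (by unfold tauD; grind))

theorem bottom_mem (hX : IsAnswerSet (PD E ∪ tauD E σ μ I) X) : AtomD.bottom ∈ X := by
  by_contra hb
  exact hX.not_pos_subset_of_head_eq_empty (r := ⟨∅, ∅, {AtomD.bottom}⟩)
    (Or.inl (by unfold PD; grind)) rfl (Set.singleton_inter_eq_empty.mpr hb) (Set.empty_subset X)

theorem labelV_mem (hX : IsAnswerSet (PD E ∪ tauD E σ μ I) X) (v : V) (s : Bool) :
    AtomD.labelV v s ∈ X :=
  hX.mem_of_head_eq_singleton (r := ⟨{AtomD.labelV v s}, {AtomD.bottom, AtomD.vertex v}, ∅⟩)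
    (Or.inl (by unfold PD; grind)) rfl (Set.empty_inter X)
    (Set.insert_subset (bottom_mem hX) (Set.singleton_subset_iff.mpr (vertex_mem hX v)))

theorem labelE_mem (hX : IsAnswerSet (PD E ∪ tauD E σ μ I) X) {u v : V} (hE : (u, v) ∈ E)
    (s : Bool) : AtomD.labelE u v s ∈ X :=
  hX.mem_of_head_eq_singleton (r := ⟨{AtomD.labelE u v s}, {AtomD.bottom, AtomD.edge u v}, ∅⟩)
    (Or.inl (by unfold PD; grind)) rfl (Set.empty_inter X)
    (Set.insert_subset (bottom_mem hX) (Set.singleton_subset_iff.mpr (edge_mem hX hE)))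

theorem labelV'_mem_of_observed (hX : IsAnswerSet (PD E ∪ tauD E σ μ I) X) {w v : V} {s : Bool}
    (hw : AtomD.active w ∈ X) (hs : μ v = some s) : AtomD.labelV' w v s ∈ X :=
  hX.mem_of_head_eq_singleton (r := ⟨{AtomD.labelV' w v s},
      {AtomD.active w, AtomD.observedV v s}, ∅⟩)
    (Or.inl (by unfold PD; grind)) rfl (Set.empty_inter X)
    (Set.insert_subset hw (Set.singleton_subset_iff.mpr (observedV_mem hX hs)))

theorem labelE'_mem_of_observed (hX : IsAnswerSet (PD E ∪ tauD E σ μ I) X) {w u v : V}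
    {s : Bool} (hw : AtomD.active w ∈ X) (hE : (u, v) ∈ E) (hs : σ (u, v) = some s) :
    AtomD.labelE' w u v s ∈ X :=
  hX.mem_of_head_eq_singleton (r := ⟨{AtomD.labelE' w u v s},
      {AtomD.active w, AtomD.observedE u v s}, ∅⟩)
    (Or.inl (by unfold PD; grind)) rfl (Set.empty_inter X)
    (Set.insert_subset hw (Set.singleton_subset_iff.mpr (observedE_mem hX hE hs)))

theorem exists_labelV'_mem (hX : IsAnswerSet (PD E ∪ tauD E σ μ I) X) {w v : V}
    (hw : AtomD.active w ∈ X) (hv : AtomD.active v ∈ X) : ∃ s, AtomD.labelV' w v s ∈ X := by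
  have hMIC : AtomD.vertexMIC v ∈ X :=
    hX.mem_of_head_eq_singleton (r := ⟨{AtomD.vertexMIC v}, {AtomD.active v}, ∅⟩)
      (Or.inl (by unfold PD; grind)) rfl (Set.empty_inter X) (Set.singleton_subset_iff.mpr hv)
  obtain ⟨a, ha, haX⟩ := hX.ruleSat (r := ⟨{AtomD.labelV' w v true, AtomD.labelV' w v false},
      {AtomD.active w, AtomD.vertexMIC v}, ∅⟩)
    (Or.inl (by unfold PD; grind)) (Set.empty_inter X)
    (Set.insert_subset hw (Set.singleton_subset_iff.mpr hMIC))
  rcases ha with rfl | rfl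
  exacts [⟨true, haX⟩, ⟨false, haX⟩]

theorem receive'_mem (hX : IsAnswerSet (PD E ∪ tauD E σ μ I) X) {w v : V} {s : Bool}
    (hvw : v ≠ w) (hv : AtomD.active v ∈ X) (hs : AtomD.labelV' w v s ∈ X) :
    AtomD.receive' w v s ∈ X := by
  by_contra hr
  exact hX.not_pos_subset_of_head_eq_empty (r := ⟨∅, {AtomD.labelV' w v s, AtomD.active v},
      {AtomD.receive' w v s}⟩) (Or.inl (by unfold PD; grind)) rfl
    (Set.singleton_inter_eq_empty.mpr hr) (Set.insert_subset hs (Set.singleton_subset_iff.mpr hv))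

theorem eq_of_observedV_mem (hX : IsAnswerSet (PD E ∪ tauD E σ μ I) X) {v : V} {s : Bool}
    (h : AtomD.observedV v s ∈ X) : μ v = some s := by
  obtain ⟨r, hr, ha, -⟩ := hX.exists_support h
  exact observedV_mem_head hr ha

theorem eq_of_observedE_mem (hX : IsAnswerSet (PD E ∪ tauD E σ μ I) X) {u v : V} {s : Bool}
    (h : AtomD.observedE u v s ∈ X) : σ (u, v) = some s := by
  obtain ⟨r, hr, ha, -⟩ := hX.exists_support h
  exact observedE_mem_head hr ha

theorem not_mem_input_of_active_mem (hX : IsAnswerSet (PD E ∪ tauD E σ μ I) X) {v : V}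
    (h : AtomD.active v ∈ X) : v ∉ I := fun hv => by
  obtain ⟨r, hr, ha, -, hneg, -⟩ := hX.exists_support h
  exact Set.eq_empty_iff_forall_notMem.mp hneg _ ⟨active_mem_head hr ha, input_mem hX hv⟩

theorem labelV'_mem_cases (hX : IsAnswerSet (PD E ∪ tauD E σ μ I) X) {w v : V} {s : Bool}
    (h : AtomD.labelV' w v s ∈ X) : AtomD.labelV' w v (!s) ∉ X ∨ μ v = some s := by
  obtain ⟨r, hr, ha, hpos, -, huniq⟩ := hX.exists_support h
  refine (labelV'_mem_head hr ha).imp (fun hH hX' => ?_) (fun hobs => ?_)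
  · simpa using huniq ⟨hH, hX'⟩
  · exact eq_of_observedV_mem hX (hpos hobs)

theorem labelE'_mem_cases (hX : IsAnswerSet (PD E ∪ tauD E σ μ I) X) {w u v : V} {s : Bool}
    (h : AtomD.labelE' w u v s ∈ X) : AtomD.labelE' w u v (!s) ∉ X ∨ σ (u, v) = some s := by
  obtain ⟨r, hr, ha, hpos, -, huniq⟩ := hX.exists_support h
  refine (labelE'_mem_head hr ha).imp (fun hH hX' => ?_) (fun hobs => ?_)
  · simpa using huniq ⟨hH, hX'⟩
  · exact eq_of_observedE_mem hX (hpos hobs)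

theorem labelV'_unique (hX : IsAnswerSet (PD E ∪ tauD E σ μ I) X) {w v : V} {s t : Bool}
    (hs : AtomD.labelV' w v s ∈ X) (ht : AtomD.labelV' w v t ∈ X) : s = t :=
  Bool.eq_of_forall_not_not_or_eq_some (p := fun s => AtomD.labelV' w v s ∈ X)
    (fun _ => labelV'_mem_cases hX) hs ht

theorem labelE'_unique (hX : IsAnswerSet (PD E ∪ tauD E σ μ I) X) {w u v : V} {s t : Bool}
    (hs : AtomD.labelE' w u v s ∈ X) (ht : AtomD.labelE' w u v t ∈ X) : s = t :=
  Bool.eq_of_forall_not_not_or_eq_some (p := fun s => AtomD.labelE' w u v s ∈ X)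
    (fun _ => labelE'_mem_cases hX) hs ht

end PD

open Classical in
noncomputable def primedVertexLabel {V : Type} (X : Set (AtomD V)) (w v : V) : Bool :=
  decide (AtomD.labelV' w v true ∈ X)

open Classical in
/-- No primed atom mentions an edge outside `E`, so observed edge labels are taken from `σ`. -/
noncomputable def primedEdgeLabel {V : Type} (σ : V × V → Option Bool) (X : Set (AtomD V))
    (w : V) (e : V × V) : Bool :=
  (σ e).getD (decide (AtomD.labelE' w e.1 e.2 true ∈ X))

def Refuted {V : Type} (σ' : V × V → Bool) (μ' : V → Bool) : AtomD V → Prop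
  | .bottom => True
  | .labelV v s => s ≠ μ' v
  | .labelE u v s => s ≠ σ' (u, v)
  | .opposite u v => μ' v = signMul (μ' u) (σ' (u, v))
  | _ => False

namespace PD

variable {V : Type} {E : Set (V × V)} {σ : V × V → Option Bool}
  {μ : V → Option Bool} {I : Set V} {X : Set (AtomD V)}

theorem primedVertexLabel_eq (hX : IsAnswerSet (PD E ∪ tauD E σ μ I) X) {w v : V} {s : Bool}
    (h : AtomD.labelV' w v s ∈ X) : primedVertexLabel X w v = s := by
  cases s
  · simpa [primedVertexLabel] using fun ht => Bool.noConfusion (labelV'_unique hX ht h)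
  · simpa [primedVertexLabel] using h

theorem primedEdgeLabel_eq (hX : IsAnswerSet (PD E ∪ tauD E σ μ I) X) {w u v : V} {s : Bool}
    (hw : AtomD.active w ∈ X) (hE : (u, v) ∈ E) (h : AtomD.labelE' w u v s ∈ X) :
    primedEdgeLabel σ X w (u, v) = s := by
  cases hσ : σ (u, v) with
  | some s' => simpa [primedEdgeLabel, hσ] using
      labelE'_unique hX (labelE'_mem_of_observed hX hw hE hσ) h
  | none =>
    simp only [primedEdgeLabel, hσ, Option.getD_none]
    cases s
    · simpa using fun ht => Bool.noConfusion (labelE'_unique hX ht h)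
    · simpa using h

theorem witnessing_primedLabels (hX : IsAnswerSet (PD E ∪ tauD E σ μ I) X) {w : V}
    (hw : AtomD.active w ∈ X) :
    Witnessing E σ μ I ({i | AtomD.active i ∈ X} \ {w}) (primedEdgeLabel σ X w)
      (primedVertexLabel X w) := by
  refine ⟨fun e s hs => by simp [primedEdgeLabel, hs],
    fun v s hs => primedVertexLabel_eq hX (labelV'_mem_of_observed hX hw hs), ?_⟩
  rintro v ⟨hv, hvw⟩ -
  obtain ⟨s, hs⟩ := exists_labelV'_mem hX hw hv
  obtain ⟨r, hr, ha, hpos, -⟩ := hX.exists_support (receive'_mem hX hvw hv hs)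
  obtain ⟨u, t, t', hE, rfl, hlE, hlV⟩ := receive'_mem_head hr ha
  refine ⟨u, hE, ?_⟩
  rw [primedVertexLabel_eq hX hs, primedVertexLabel_eq hX (hpos hlV),
    primedEdgeLabel_eq hX hw hE (hpos hlE)]

theorem ruleSat_diff_refuted (hX : IsAnswerSet (PD E ∪ tauD E σ μ I) X)
    {σ' : V × V → Bool} {μ' : V → Bool} (hW : Witnessing E σ μ I {i | AtomD.active i ∈ X} σ' μ')
    {r : Rule (AtomD V)} (hr : r ∈ PD E ∪ tauD E σ μ I) (hneg : r.neg ∩ X = ∅) :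
    RuleSat (X \ {a | Refuted σ' μ' a}) ⟨r.head, r.pos, ∅⟩ := by
  intro hpos _
  have hposX : r.pos ⊆ X := hpos.trans Set.sdiff_subset
  have hpos' : ∀ a ∈ r.pos, ¬ Refuted σ' μ' a := fun a ha => (hpos ha).2
  by_cases hgood : ¬ ∃ a ∈ r.head, Refuted σ' μ' a
  · obtain ⟨a, haH, haX⟩ := hX.ruleSat hr hneg hposX
    exact ⟨a, haH, haX, fun ha => hgood ⟨a, haH, ha⟩⟩
  obtain ⟨a, haH, ha⟩ := not_not.mp hgood
  cases a with
  | bottom =>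
    obtain ⟨v, hv, hopp⟩ := bottom_mem_head hr haH
    obtain ⟨u, hE, hsign⟩ := hW.2.2 v (hposX hv) (not_mem_input_of_active_mem hX (hposX hv))
    exact absurd hsign (hpos' _ (hopp u hE))
  | labelV v s =>
    rcases labelV_mem_head hr haH with hobs | hall | hbot
    · exact absurd (hW.2.1 v s (eq_of_observedV_mem hX (hposX hobs))).symm ha
    · exact ⟨_, hall (μ' v), labelV_mem hX v _, fun h => h rfl⟩
    · exact absurd trivial (hpos' _ hbot)
  | labelE u v s =>
    obtain ⟨hE, hobs | hall | hbot⟩ := labelE_mem_head hr haH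
    · exact absurd (hW.1 (u, v) s (eq_of_observedE_mem hX (hposX hobs))).symm ha
    · exact ⟨_, hall (σ' (u, v)), labelE_mem hX hE _, fun h => h rfl⟩
    · exact absurd trivial (hpos' _ hbot)
  | opposite u v =>
    obtain ⟨t, s, s', hsign, hlE, hlu, hlv⟩ := opposite_mem_head hr haH
    have ht : t = σ' (u, v) := not_not.mp (hpos' _ hlE)
    have hs : s = μ' u := not_not.mp (hpos' _ hlu)
    have hs' : s' = μ' v := not_not.mp (hpos' _ hlv)
    have ha : μ' v = signMul (μ' u) (σ' (u, v)) := ha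
    subst ht hs hs'
    exact (hsign ha.symm).elim
  | _ => exact ha.elim

theorem not_exists_witnessing_active (hX : IsAnswerSet (PD E ∪ tauD E σ μ I) X) :
    ¬ ∃ σ' μ', Witnessing E σ μ I {i | AtomD.active i ∈ X} σ' μ' := by
  rintro ⟨σ', μ', hW⟩
  have hY : X \ {a | Refuted σ' μ' a} = X := hX.2 _ Set.sdiff_subset <| by
    rintro _ ⟨r, hr, hneg, rfl⟩
    exact ruleSat_diff_refuted hX hW hr hneg
  exact (hY.symm ▸ bottom_mem hX : AtomD.bottom ∈ X \ {a | Refuted σ' μ' a}).2 trivial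

end PD

theorem mic_soundness_general {V : Type}
    (E : Set (V × V)) (σ : V × V → Option Bool) (μ : V → Option Bool) (I : Set V)
    (X : Set (AtomD V)) (hX : IsAnswerSet (PD E ∪ tauD E σ μ I) X) :
    IsMIC E σ μ I {i | AtomD.active i ∈ X} := by
  refine ⟨PD.not_exists_witnessing_active hX, fun W' hW' => ?_⟩
  obtain ⟨w, hw, hwW'⟩ := Set.exists_of_ssubset hW'
  exact ⟨_, _, (PD.witnessing_primedLabels hX hw).mono fun i hi =>
    ⟨hW'.subset hi, fun h => hwW' (h ▸ hi)⟩⟩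

/-- Soundness of the MIC-extraction encoding: if `X` is an answer set of
`P_D ∪ τ((V,E,σ),μ)`, then `{i | active(i) ∈ X}` is a Minimal Inconsistent Core. -/
theorem mic_soundness {V : Type} [Fintype V]
    (E : Set (V × V)) (σ : V × V → Option Bool) (μ : V → Option Bool) (I : Set V)
    (hσ : ∀ e, σ e ≠ none → e ∈ E)
    (X : Set (AtomD V)) (hX : IsAnswerSet (PD E ∪ tauD E σ μ I) X) :
    IsMIC E σ μ I {i | AtomD.active i ∈ X} :=
  mic_soundness_general E σ μ I X hX
end

section
/- Completeness of the MIC-extraction encoding: Let (V,E,σ) be an influence graph with a designated set of input vertices and μ : V → {+,−} a partial vertex labeling. If W ⊆ V is a Minimal Inconsistent Core, then there is an answer set X of the disjunctive logic program P_D ∪ τ((V,E,σ),μ) such that { i ∈ V | active(i) ∈ X } = W. -/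
namespace MICAux

variable {V : Type}

/-- Vertices occurring in the MIC part: active vertices and sources of edges
into active vertices. -/
def MICverts (E : Set (V × V)) (W : Set V) : Set V :=
  {u | u ∈ W ∨ ∃ x, (u, x) ∈ E ∧ x ∈ W}

/-- The intended answer set. -/
def XD (E : Set (V × V)) (σ : V × V → Option Bool) (μ : V → Option Bool)
    (I W : Set V) (sE : V → V × V → Bool) (mV : V → V → Bool) :
    Set (AtomD V) := fun a =>
  match a with
  | .vertex _ => True
  | .edge u v => (u, v) ∈ E
  | .observedE u v s => (u, v) ∈ E ∧ σ (u, v) = some s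
  | .observedV v s => μ v = some s
  | .input i => i ∈ I
  | .labelV _ _ => True
  | .labelE u v _ => (u, v) ∈ E
  | .active i => i ∈ W
  | .inactive i => i ∉ W ∧ i ∉ I
  | .edgeMIC u v => (u, v) ∈ E ∧ v ∈ W
  | .vertexMIC u => u ∈ MICverts E W
  | .opposite u v => (u, v) ∈ E
  | .bottom => True
  | .labelV' w v s => w ∈ W ∧ (v ∈ MICverts E W ∨ (μ v).isSome) ∧ s = mV w v
  | .labelE' w u v s => w ∈ W ∧ (u, v) ∈ E ∧ (v ∈ W ∨ (σ (u, v)).isSome) ∧ s = sE w (u, v)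
  | .receive' w v b => w ∈ W ∧ v ≠ w ∧ ∃ u, (u, v) ∈ E ∧ (v ∈ W ∨ (σ (u, v)).isSome) ∧
      (u ∈ MICverts E W ∨ (μ u).isSome) ∧ b = signMul (mV w u) (sE w (u, v))

section MemLemmas

variable {E : Set (V × V)} {σ : V × V → Option Bool} {μ : V → Option Bool}
  {I W : Set V} {sE : V → V × V → Bool} {mV : V → V → Bool}

theorem mem_vertex (i : V) : AtomD.vertex i ∈ XD E σ μ I W sE mV ↔ True := Iff.rfl
theorem mem_edge (u v : V) : AtomD.edge u v ∈ XD E σ μ I W sE mV ↔ (u, v) ∈ E := Iff.rfl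
theorem mem_observedE (u v : V) (s : Bool) :
    AtomD.observedE u v s ∈ XD E σ μ I W sE mV ↔ (u, v) ∈ E ∧ σ (u, v) = some s := Iff.rfl
theorem mem_observedV (v : V) (s : Bool) :
    AtomD.observedV v s ∈ XD E σ μ I W sE mV ↔ μ v = some s := Iff.rfl
theorem mem_input (i : V) : AtomD.input i ∈ XD E σ μ I W sE mV ↔ i ∈ I := Iff.rfl
theorem mem_labelV (v : V) (s : Bool) : AtomD.labelV v s ∈ XD E σ μ I W sE mV ↔ True := Iff.rfl
theorem mem_labelE (u v : V) (s : Bool) :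
    AtomD.labelE u v s ∈ XD E σ μ I W sE mV ↔ (u, v) ∈ E := Iff.rfl
theorem mem_active (i : V) : AtomD.active i ∈ XD E σ μ I W sE mV ↔ i ∈ W := Iff.rfl
theorem mem_inactive (i : V) :
    AtomD.inactive i ∈ XD E σ μ I W sE mV ↔ i ∉ W ∧ i ∉ I := Iff.rfl
theorem mem_edgeMIC (u v : V) :
    AtomD.edgeMIC u v ∈ XD E σ μ I W sE mV ↔ (u, v) ∈ E ∧ v ∈ W := Iff.rfl
theorem mem_vertexMIC (u : V) :
    AtomD.vertexMIC u ∈ XD E σ μ I W sE mV ↔ u ∈ MICverts E W := Iff.rfl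
theorem mem_opposite (u v : V) :
    AtomD.opposite u v ∈ XD E σ μ I W sE mV ↔ (u, v) ∈ E := Iff.rfl
theorem mem_bottom : AtomD.bottom ∈ XD E σ μ I W sE mV ↔ True := Iff.rfl
theorem mem_labelV' (w v : V) (s : Bool) :
    AtomD.labelV' w v s ∈ XD E σ μ I W sE mV ↔
      w ∈ W ∧ (v ∈ MICverts E W ∨ (μ v).isSome) ∧ s = mV w v := Iff.rfl
theorem mem_labelE' (w u v : V) (s : Bool) :
    AtomD.labelE' w u v s ∈ XD E σ μ I W sE mV ↔
      w ∈ W ∧ (u, v) ∈ E ∧ (v ∈ W ∨ (σ (u, v)).isSome) ∧ s = sE w (u, v) := Iff.rfl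
theorem mem_receive' (w v : V) (b : Bool) :
    AtomD.receive' w v b ∈ XD E σ μ I W sE mV ↔
      w ∈ W ∧ v ≠ w ∧ ∃ u, (u, v) ∈ E ∧ (v ∈ W ∨ (σ (u, v)).isSome) ∧
        (u ∈ MICverts E W ∨ (μ u).isSome) ∧ b = signMul (mV w u) (sE w (u, v)) := Iff.rfl

end MemLemmas

section PDmem

variable {E : Set (V × V)}

theorem pd1 (v : V) (s : Bool) :
    (⟨{AtomD.labelV v s}, {AtomD.observedV v s}, ∅⟩ : Rule (AtomD V)) ∈ PD E :=
  Or.inl ⟨v, s, rfl⟩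
theorem pd2 (u v : V) (s : Bool) (h : (u, v) ∈ E) :
    (⟨{AtomD.labelE u v s}, {AtomD.observedE u v s}, ∅⟩ : Rule (AtomD V)) ∈ PD E :=
  Or.inr (Or.inl ⟨u, v, s, h, rfl⟩)
theorem pd3 (v : V) :
    (⟨{AtomD.active v, AtomD.inactive v}, {AtomD.vertex v}, {AtomD.input v}⟩ : Rule (AtomD V)) ∈ PD E :=
  Or.inr (Or.inr (Or.inl ⟨v, rfl⟩))
theorem pd4 (u v : V) (h : (u, v) ∈ E) :
    (⟨{AtomD.edgeMIC u v}, {AtomD.edge u v, AtomD.active v}, ∅⟩ : Rule (AtomD V)) ∈ PD E :=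
  Or.inr (Or.inr (Or.inr (Or.inl ⟨u, v, h, rfl⟩)))
theorem pd5 (u v : V) (h : (u, v) ∈ E) :
    (⟨{AtomD.vertexMIC u}, {AtomD.edgeMIC u v}, ∅⟩ : Rule (AtomD V)) ∈ PD E :=
  Or.inr (Or.inr (Or.inr (Or.inr (Or.inl ⟨u, v, h, rfl⟩))))
theorem pd6 (v : V) :
    (⟨{AtomD.vertexMIC v}, {AtomD.active v}, ∅⟩ : Rule (AtomD V)) ∈ PD E :=
  Or.inr (Or.inr (Or.inr (Or.inr (Or.inr (Or.inl ⟨v, rfl⟩)))))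
theorem pd7 (v : V) :
    (⟨{AtomD.labelV v true, AtomD.labelV v false}, {AtomD.vertexMIC v}, ∅⟩ : Rule (AtomD V)) ∈ PD E :=
  Or.inr (Or.inr (Or.inr (Or.inr (Or.inr (Or.inr (Or.inl ⟨v, rfl⟩))))))
theorem pd8 (u v : V) (h : (u, v) ∈ E) :
    (⟨{AtomD.labelE u v true, AtomD.labelE u v false}, {AtomD.edgeMIC u v}, ∅⟩ : Rule (AtomD V)) ∈ PD E :=
  Or.inr (Or.inr (Or.inr (Or.inr (Or.inr (Or.inr (Or.inr (Or.inl ⟨u, v, h, rfl⟩)))))))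
theorem pd9 (u v : V) (s : Bool) (h : (u, v) ∈ E) :
    (⟨{AtomD.opposite u v},
      {AtomD.labelE u v false, AtomD.labelV u s, AtomD.labelV v s}, ∅⟩ : Rule (AtomD V)) ∈ PD E :=
  Or.inr (Or.inr (Or.inr (Or.inr (Or.inr (Or.inr (Or.inr (Or.inr (Or.inl ⟨u, v, s, h, rfl⟩))))))))
theorem pd10 (u v : V) (s t : Bool) (h : (u, v) ∈ E) (hst : s ≠ t) :
    (⟨{AtomD.opposite u v},
      {AtomD.labelE u v true, AtomD.labelV u s, AtomD.labelV v t}, ∅⟩ : Rule (AtomD V)) ∈ PD E :=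
  Or.inr (Or.inr (Or.inr (Or.inr (Or.inr (Or.inr (Or.inr (Or.inr (Or.inr (Or.inl
    ⟨u, v, s, t, h, hst, rfl⟩)))))))))
theorem pd11 (v : V) :
    (⟨{AtomD.bottom},
      insert (AtomD.active v) {a | ∃ u, (u, v) ∈ E ∧ a = AtomD.opposite u v}, ∅⟩ : Rule (AtomD V)) ∈ PD E :=
  Or.inr (Or.inr (Or.inr (Or.inr (Or.inr (Or.inr (Or.inr (Or.inr (Or.inr (Or.inr (Or.inl
    ⟨v, rfl⟩))))))))))
theorem pd13 (v : V) (s : Bool) :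
    (⟨{AtomD.labelV v s}, {AtomD.bottom, AtomD.vertex v}, ∅⟩ : Rule (AtomD V)) ∈ PD E :=
  Or.inr (Or.inr (Or.inr (Or.inr (Or.inr (Or.inr (Or.inr (Or.inr (Or.inr (Or.inr (Or.inr (Or.inr (Or.inl
    ⟨v, s, rfl⟩))))))))))))
theorem pd14 (u v : V) (s : Bool) (h : (u, v) ∈ E) :
    (⟨{AtomD.labelE u v s}, {AtomD.bottom, AtomD.edge u v}, ∅⟩ : Rule (AtomD V)) ∈ PD E :=
  Or.inr (Or.inr (Or.inr (Or.inr (Or.inr (Or.inr (Or.inr (Or.inr (Or.inr (Or.inr (Or.inr (Or.inr (Or.inr (Or.inl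
    ⟨u, v, s, h, rfl⟩)))))))))))))
theorem pd15 (w v : V) :
    (⟨{AtomD.labelV' w v true, AtomD.labelV' w v false},
      {AtomD.active w, AtomD.vertexMIC v}, ∅⟩ : Rule (AtomD V)) ∈ PD E :=
  Or.inr (Or.inr (Or.inr (Or.inr (Or.inr (Or.inr (Or.inr (Or.inr (Or.inr (Or.inr (Or.inr (Or.inr (Or.inr (Or.inr (Or.inl
    ⟨w, v, rfl⟩))))))))))))))
theorem pd16 (w u v : V) (h : (u, v) ∈ E) :
    (⟨{AtomD.labelE' w u v true, AtomD.labelE' w u v false},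
      {AtomD.active w, AtomD.edgeMIC u v}, ∅⟩ : Rule (AtomD V)) ∈ PD E :=
  Or.inr (Or.inr (Or.inr (Or.inr (Or.inr (Or.inr (Or.inr (Or.inr (Or.inr (Or.inr (Or.inr (Or.inr (Or.inr (Or.inr (Or.inr (Or.inl
    ⟨w, u, v, h, rfl⟩)))))))))))))))
theorem pd17 (w v : V) (s : Bool) :
    (⟨{AtomD.labelV' w v s}, {AtomD.active w, AtomD.observedV v s}, ∅⟩ : Rule (AtomD V)) ∈ PD E :=
  Or.inr (Or.inr (Or.inr (Or.inr (Or.inr (Or.inr (Or.inr (Or.inr (Or.inr (Or.inr (Or.inr (Or.inr (Or.inr (Or.inr (Or.inr (Or.inr (Or.inl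
    ⟨w, v, s, rfl⟩))))))))))))))))
theorem pd18 (w u v : V) (s : Bool) (h : (u, v) ∈ E) :
    (⟨{AtomD.labelE' w u v s}, {AtomD.active w, AtomD.observedE u v s}, ∅⟩ : Rule (AtomD V)) ∈ PD E :=
  Or.inr (Or.inr (Or.inr (Or.inr (Or.inr (Or.inr (Or.inr (Or.inr (Or.inr (Or.inr (Or.inr (Or.inr (Or.inr (Or.inr (Or.inr (Or.inr (Or.inr (Or.inl
    ⟨w, u, v, s, h, rfl⟩)))))))))))))))))
theorem pd19 (w u v : V) (s : Bool) (h : (u, v) ∈ E) (hvw : v ≠ w) :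
    (⟨{AtomD.receive' w v true},
      {AtomD.labelE' w u v s, AtomD.labelV' w u s}, ∅⟩ : Rule (AtomD V)) ∈ PD E :=
  Or.inr (Or.inr (Or.inr (Or.inr (Or.inr (Or.inr (Or.inr (Or.inr (Or.inr (Or.inr (Or.inr (Or.inr (Or.inr (Or.inr (Or.inr (Or.inr (Or.inr (Or.inr (Or.inl
    ⟨w, u, v, s, h, hvw, rfl⟩))))))))))))))))))
theorem pd20 (w u v : V) (s t : Bool) (h : (u, v) ∈ E) (hvw : v ≠ w) (hst : s ≠ t) :
    (⟨{AtomD.receive' w v false},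
      {AtomD.labelE' w u v s, AtomD.labelV' w u t}, ∅⟩ : Rule (AtomD V)) ∈ PD E :=
  Or.inr (Or.inr (Or.inr (Or.inr (Or.inr (Or.inr (Or.inr (Or.inr (Or.inr (Or.inr (Or.inr (Or.inr (Or.inr (Or.inr (Or.inr (Or.inr (Or.inr (Or.inr (Or.inr (Or.inl
    ⟨w, u, v, s, t, h, hvw, hst, rfl⟩)))))))))))))))))))

end PDmem

section Taumem

variable {E : Set (V × V)} {σ : V × V → Option Bool} {μ : V → Option Bool} {I : Set V}

theorem tau1 (i : V) : fact (AtomD.vertex i) ∈ tauD E σ μ I := Or.inl ⟨i, rfl⟩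
theorem tau2 (j i : V) (h : (j, i) ∈ E) : fact (AtomD.edge j i) ∈ tauD E σ μ I :=
  Or.inr (Or.inl ⟨j, i, h, rfl⟩)
theorem tau3 (j i : V) (s : Bool) (h : (j, i) ∈ E) (hs : σ (j, i) = some s) :
    fact (AtomD.observedE j i s) ∈ tauD E σ μ I :=
  Or.inr (Or.inr (Or.inl ⟨j, i, s, h, hs, rfl⟩))
theorem tau4 (i : V) (s : Bool) (hs : μ i = some s) :
    fact (AtomD.observedV i s) ∈ tauD E σ μ I :=
  Or.inr (Or.inr (Or.inr (Or.inl ⟨i, s, hs, rfl⟩)))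
theorem tau5 (i : V) (hi : i ∈ I) : fact (AtomD.input i) ∈ tauD E σ μ I :=
  Or.inr (Or.inr (Or.inr (Or.inr ⟨i, hi, rfl⟩)))

end Taumem

end MICAux

open MICAux in
/-- Completeness of the MIC-extraction encoding: if `W` is a Minimal Inconsistent
Core, then there is an answer set `X` of `P_D ∪ τ((V,E,σ),μ)` with
`{i | active(i) ∈ X} = W`. -/
theorem mic_completeness {V : Type} [Fintype V]
    (E : Set (V × V)) (σ : V × V → Option Bool) (μ : V → Option Bool) (I : Set V)
    (hσ : ∀ e, σ e ≠ none → e ∈ E)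
    (W : Set V) (hW : IsMIC E σ μ I W) :
    ∃ X : Set (AtomD V), IsAnswerSet (PD E ∪ tauD E σ μ I) X ∧
      {i | AtomD.active i ∈ X} = W := by
  classical
  obtain ⟨hWnowit, hWmin⟩ := hW
  have hWI : ∀ i ∈ W, i ∉ I := by
    intro i hi hiI
    obtain ⟨σ', μ', h1, h2, h3⟩ := hWmin (W \ {i}) (Set.sdiff_singleton_ssubset.mpr hi)
    exact hWnowit ⟨σ', μ', h1, h2, fun j hj hjI =>
      h3 j ⟨hj, fun he => hjI (Set.mem_singleton_iff.mp he ▸ hiI)⟩ hjI⟩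
  have hwit : ∀ w : V, ∃ (s : V × V → Bool) (m : V → Bool),
      w ∈ W → Witnessing E σ μ I (W \ {w}) s m := by
    intro w
    by_cases hw : w ∈ W
    · obtain ⟨s', m', h⟩ := hWmin (W \ {w}) (Set.sdiff_singleton_ssubset.mpr hw)
      exact ⟨s', m', fun _ => h⟩
    · exact ⟨fun _ => true, fun _ => true, fun h => absurd h hw⟩
  choose sE mV hsm using hwit
  have hextσ : ∀ w ∈ W, ∀ e s, σ e = some s → sE w e = s := fun w hw => (hsm w hw).1
  have hextμ : ∀ w ∈ W, ∀ i s, μ i = some s → mV w i = s := fun w hw => (hsm w hw).2.1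
  have hwitw : ∀ w ∈ W, ∀ v ∈ W, v ≠ w →
      ∃ u, (u, v) ∈ E ∧ mV w v = signMul (mV w u) (sE w (u, v)) := by
    intro w hw v hv hne
    exact (hsm w hw).2.2 v ⟨hv, fun h => hne (Set.mem_singleton_iff.mp h)⟩ (hWI v hv)
  refine ⟨XD E σ μ I W sE mV, ⟨?_, ?_⟩, Set.ext fun i => Iff.rfl⟩
  · -- X satisfies the reduct
    rintro r' ⟨r, hr, hneg, rfl⟩
    intro hpos _
    rcases hr with hr | hr
    · -- PD rules
      simp only [PD, Set.mem_setOf_eq] at hr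
      rcases hr with ⟨v, s, rfl⟩ | ⟨u, v, s, hE, rfl⟩ | ⟨v, rfl⟩ | ⟨u, v, hE, rfl⟩ |
        ⟨u, v, hE, rfl⟩ | ⟨v, rfl⟩ | ⟨v, rfl⟩ | ⟨u, v, hE, rfl⟩ | ⟨u, v, s, hE, rfl⟩ |
        ⟨u, v, s, t, hE, hst, rfl⟩ | ⟨v, rfl⟩ | rfl | ⟨v, s, rfl⟩ | ⟨u, v, s, hE, rfl⟩ |
        ⟨w, v, rfl⟩ | ⟨w, u, v, hE, rfl⟩ | ⟨w, v, s, rfl⟩ | ⟨w, u, v, s, hE, rfl⟩ |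
        ⟨w, u, v, s, hE, hvw, rfl⟩ | ⟨w, u, v, s, t, hE, hvw, hst, rfl⟩ | ⟨w, v, s, hvw, rfl⟩
      · -- 1: labelV ← observedV
        exact ⟨_, rfl, trivial⟩
      · -- 2: labelE ← observedE
        exact ⟨_, rfl, hE⟩
      · -- 3: active ; inactive
        have hvI : v ∉ I := fun h =>
          Set.eq_empty_iff_forall_notMem.mp hneg (AtomD.input v) ⟨rfl, h⟩
        by_cases hv : v ∈ W
        · exact ⟨_, Set.mem_insert _ _, hv⟩
        · exact ⟨_, Set.mem_insert_of_mem _ (Set.mem_singleton _), hv, hvI⟩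
      · -- 4: edgeMIC
        have h1 := (mem_active v).mp (hpos (Set.mem_insert_of_mem _ (Set.mem_singleton _)))
        exact ⟨_, rfl, hE, h1⟩
      · -- 5: vertexMIC ← edgeMIC
        have h1 := (mem_edgeMIC u v).mp (hpos (Set.mem_singleton _))
        exact ⟨_, rfl, Or.inr ⟨v, h1.1, h1.2⟩⟩
      · -- 6: vertexMIC ← active
        have h1 := (mem_active v).mp (hpos (Set.mem_singleton _))
        exact ⟨_, rfl, Or.inl h1⟩
      · -- 7: labelV disjunction
        exact ⟨_, Set.mem_insert _ _, trivial⟩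
      · -- 8: labelE disjunction
        have h1 := (mem_edgeMIC u v).mp (hpos (Set.mem_singleton _))
        exact ⟨_, Set.mem_insert _ _, h1.1⟩
      · -- 9: opposite (negative edge)
        exact ⟨_, rfl, hE⟩
      · -- 10: opposite (positive edge)
        exact ⟨_, rfl, hE⟩
      · -- 11: bottom rule
        exact ⟨_, rfl, trivial⟩
      · -- 12: ← not bottom
        exact (Set.eq_empty_iff_forall_notMem.mp hneg AtomD.bottom ⟨rfl, trivial⟩).elim
      · -- 13: labelV ← bottom
        exact ⟨_, rfl, trivial⟩
      · -- 14: labelE ← bottom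
        exact ⟨_, rfl, hE⟩
      · -- 15: labelV' disjunction
        have hw := (mem_active w).mp (hpos (Set.mem_insert _ _))
        have hv := (mem_vertexMIC v).mp (hpos (Set.mem_insert_of_mem _ (Set.mem_singleton _)))
        refine ⟨AtomD.labelV' w v (mV w v), ?_, (mem_labelV' w v _).mpr ⟨hw, Or.inl hv, rfl⟩⟩
        cases mV w v
        · exact Set.mem_insert_of_mem _ (Set.mem_singleton _)
        · exact Set.mem_insert _ _
      · -- 16: labelE' disjunction
        have hw := (mem_active w).mp (hpos (Set.mem_insert _ _))
        have hv := (mem_edgeMIC u v).mp (hpos (Set.mem_insert_of_mem _ (Set.mem_singleton _)))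
        refine ⟨AtomD.labelE' w u v (sE w (u, v)), ?_,
          (mem_labelE' w u v _).mpr ⟨hw, hE, Or.inl hv.2, rfl⟩⟩
        cases sE w (u, v)
        · exact Set.mem_insert_of_mem _ (Set.mem_singleton _)
        · exact Set.mem_insert _ _
      · -- 17: labelV' ← observedV
        have hw := (mem_active w).mp (hpos (Set.mem_insert _ _))
        have hobs := (mem_observedV v s).mp (hpos (Set.mem_insert_of_mem _ (Set.mem_singleton _)))
        exact ⟨_, rfl, (mem_labelV' w v s).mpr
          ⟨hw, Or.inr (by rw [hobs]; rfl), (hextμ w hw v s hobs).symm⟩⟩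
      · -- 18: labelE' ← observedE
        have hw := (mem_active w).mp (hpos (Set.mem_insert _ _))
        have hobs := (mem_observedE u v s).mp (hpos (Set.mem_insert_of_mem _ (Set.mem_singleton _)))
        exact ⟨_, rfl, (mem_labelE' w u v s).mpr
          ⟨hw, hE, Or.inr (by rw [hobs.2]; rfl), (hextσ w hw (u, v) s hobs.2).symm⟩⟩
      · -- 19: receive' true
        have h1 := (mem_labelE' w u v s).mp (hpos (Set.mem_insert _ _))
        have h2 := (mem_labelV' w u s).mp (hpos (Set.mem_insert_of_mem _ (Set.mem_singleton _)))
        refine ⟨_, rfl, (mem_receive' w v true).mpr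
          ⟨h1.1, hvw, u, hE, h1.2.2.1, h2.2.1, ?_⟩⟩
        rw [← h1.2.2.2, ← h2.2.2]
        cases s <;> rfl
      · -- 20: receive' false
        have h1 := (mem_labelE' w u v s).mp (hpos (Set.mem_insert _ _))
        have h2 := (mem_labelV' w u t).mp (hpos (Set.mem_insert_of_mem _ (Set.mem_singleton _)))
        refine ⟨_, rfl, (mem_receive' w v false).mpr
          ⟨h1.1, hvw, u, hE, h1.2.2.1, h2.2.1, ?_⟩⟩
        rw [← h1.2.2.2, ← h2.2.2]
        cases s <;> cases t <;> first | rfl | exact absurd rfl hst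
      · -- 21: constraint
        have h1 := (mem_labelV' w v s).mp (hpos (Set.mem_insert _ _))
        have h2 := (mem_active v).mp (hpos (Set.mem_insert_of_mem _ (Set.mem_singleton _)))
        obtain ⟨u, hE, heq⟩ := hwitw w h1.1 v h2 hvw
        have hmem : AtomD.receive' w v (mV w v) ∈ XD E σ μ I W sE mV :=
          (mem_receive' w v _).mpr
            ⟨h1.1, hvw, u, hE, Or.inl h2, Or.inl (Or.inr ⟨v, hE, h2⟩), heq⟩
        exact (Set.eq_empty_iff_forall_notMem.mp hneg (AtomD.receive' w v s)
          ⟨rfl, by rw [h1.2.2]; exact hmem⟩).elim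
    · -- tauD facts
      simp only [tauD, Set.mem_setOf_eq] at hr
      rcases hr with ⟨i, rfl⟩ | ⟨j, i, hE, rfl⟩ | ⟨j, i, s, hE, hs, rfl⟩ | ⟨i, s, hs, rfl⟩ |
        ⟨i, hi, rfl⟩
      · exact ⟨_, rfl, trivial⟩
      · exact ⟨_, rfl, hE⟩
      · exact ⟨_, rfl, hE, hs⟩
      · exact ⟨_, rfl, hs⟩
      · exact ⟨_, rfl, hi⟩
  · -- minimality
    intro Y hYX Ysat
    have hder : ∀ (h p n : Set (AtomD V)),
        (⟨h, p, n⟩ : Rule (AtomD V)) ∈ PD E ∪ tauD E σ μ I →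
        n ∩ XD E σ μ I W sE mV = ∅ → p ⊆ Y → (h ∩ Y).Nonempty :=
      fun h p n hr hn hp => Ysat ⟨h, p, ∅⟩ ⟨⟨h, p, n⟩, hr, hn, rfl⟩ hp (Set.empty_inter Y)
    have hder1 : ∀ (a : AtomD V) (p n : Set (AtomD V)),
        (⟨{a}, p, n⟩ : Rule (AtomD V)) ∈ PD E ∪ tauD E σ μ I →
        n ∩ XD E σ μ I W sE mV = ∅ → p ⊆ Y → a ∈ Y := by
      intro a p n hr hn hp
      obtain ⟨b, hb, hbY⟩ := hder _ _ _ hr hn hp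
      exact Set.mem_singleton_iff.mp hb ▸ hbY
    have hsub1 : ∀ {a : AtomD V}, a ∈ Y → ({a} : Set (AtomD V)) ⊆ Y :=
      fun h => Set.singleton_subset_iff.mpr h
    have hsub2 : ∀ {a b : AtomD V}, a ∈ Y → b ∈ Y → ({a, b} : Set (AtomD V)) ⊆ Y := by
      intro a b ha hb x hx
      simp only [Set.mem_insert_iff, Set.mem_singleton_iff] at hx
      rcases hx with rfl | rfl <;> assumption
    have hsub3 : ∀ {a b c : AtomD V}, a ∈ Y → b ∈ Y → c ∈ Y →
        ({a, b, c} : Set (AtomD V)) ⊆ Y := by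
      intro a b c ha hb hc x hx
      simp only [Set.mem_insert_iff, Set.mem_singleton_iff] at hx
      rcases hx with rfl | rfl | rfl <;> assumption
    have hfact : ∀ (a : AtomD V), fact a ∈ PD E ∪ tauD E σ μ I → a ∈ Y :=
      fun a hr => hder1 a ∅ ∅ hr (Set.empty_inter _) (Set.empty_subset Y)
    have hvertY : ∀ i : V, AtomD.vertex i ∈ Y := fun i => hfact _ (Or.inr (tau1 i))
    have hedgeY : ∀ u v : V, (u, v) ∈ E → AtomD.edge u v ∈ Y :=
      fun u v h => hfact _ (Or.inr (tau2 u v h))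
    have hobsEY : ∀ (u v : V) (s : Bool), (u, v) ∈ E → σ (u, v) = some s →
        AtomD.observedE u v s ∈ Y := fun u v s hE h => hfact _ (Or.inr (tau3 u v s hE h))
    have hobsVY : ∀ (v : V) (s : Bool), μ v = some s → AtomD.observedV v s ∈ Y :=
      fun v s h => hfact _ (Or.inr (tau4 v s h))
    have hinputY : ∀ i ∈ I, AtomD.input i ∈ Y := fun i h => hfact _ (Or.inr (tau5 i h))
    have hnegI : ∀ i : V, i ∉ I →
        ({AtomD.input i} : Set (AtomD V)) ∩ XD E σ μ I W sE mV = ∅ := by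
      intro i hi
      apply Set.eq_empty_iff_forall_notMem.mpr
      rintro a ⟨ha1, ha2⟩
      rw [Set.mem_singleton_iff] at ha1
      subst ha1
      exact hi ((mem_input i).mp ha2)
    have hactY : ∀ i ∈ W, AtomD.active i ∈ Y := by
      intro i hi
      obtain ⟨b, hb, hbY⟩ := hder _ _ _ (Or.inl (pd3 i)) (hnegI i (hWI i hi))
        (hsub1 (hvertY i))
      simp only [Set.mem_insert_iff, Set.mem_singleton_iff] at hb
      rcases hb with rfl | rfl
      · exact hbY
      · exact absurd ((mem_inactive i).mp (hYX hbY)).1 (not_not_intro hi)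
    have hinactY : ∀ i : V, i ∉ W → i ∉ I → AtomD.inactive i ∈ Y := by
      intro i hiW hiI
      obtain ⟨b, hb, hbY⟩ := hder _ _ _ (Or.inl (pd3 i)) (hnegI i hiI) (hsub1 (hvertY i))
      simp only [Set.mem_insert_iff, Set.mem_singleton_iff] at hb
      rcases hb with rfl | rfl
      · exact absurd ((mem_active i).mp (hYX hbY)) hiW
      · exact hbY
    have hedgeMICY : ∀ u v : V, (u, v) ∈ E → v ∈ W → AtomD.edgeMIC u v ∈ Y :=
      fun u v hE hv => hder1 _ _ _ (Or.inl (pd4 u v hE)) (Set.empty_inter _)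
        (hsub2 (hedgeY u v hE) (hactY v hv))
    have hvMICY : ∀ u ∈ MICverts E W, AtomD.vertexMIC u ∈ Y := by
      intro u hu
      rcases hu with hu | ⟨x, hE, hx⟩
      · exact hder1 _ _ _ (Or.inl (pd6 u)) (Set.empty_inter _) (hsub1 (hactY u hu))
      · exact hder1 _ _ _ (Or.inl (pd5 u x hE)) (Set.empty_inter _)
          (hsub1 (hedgeMICY u x hE hx))
    have hlabelVobsY : ∀ (v : V) (s : Bool), μ v = some s → AtomD.labelV v s ∈ Y :=
      fun v s h => hder1 _ _ _ (Or.inl (pd1 v s)) (Set.empty_inter _)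
        (hsub1 (hobsVY v s h))
    have hlabelEobsY : ∀ (u v : V) (s : Bool), (u, v) ∈ E → σ (u, v) = some s →
        AtomD.labelE u v s ∈ Y := fun u v s hE h =>
      hder1 _ _ _ (Or.inl (pd2 u v s hE)) (Set.empty_inter _) (hsub1 (hobsEY u v s hE h))
    have hlabelVsomeY : ∀ v ∈ MICverts E W,
        AtomD.labelV v true ∈ Y ∨ AtomD.labelV v false ∈ Y := by
      intro v hv
      obtain ⟨b, hb, hbY⟩ := hder _ _ _ (Or.inl (pd7 v)) (Set.empty_inter _)
        (hsub1 (hvMICY v hv))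
      simp only [Set.mem_insert_iff, Set.mem_singleton_iff] at hb
      rcases hb with rfl | rfl
      · exact Or.inl hbY
      · exact Or.inr hbY
    have hlabelEsomeY : ∀ u v : V, (u, v) ∈ E → v ∈ W →
        AtomD.labelE u v true ∈ Y ∨ AtomD.labelE u v false ∈ Y := by
      intro u v hE hv
      obtain ⟨b, hb, hbY⟩ := hder _ _ _ (Or.inl (pd8 u v hE)) (Set.empty_inter _)
        (hsub1 (hedgeMICY u v hE hv))
      simp only [Set.mem_insert_iff, Set.mem_singleton_iff] at hb
      rcases hb with rfl | rfl
      · exact Or.inl hbY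
      · exact Or.inr hbY
    have hbottomY : AtomD.bottom ∈ Y := by
      by_contra hb
      apply hWnowit
      set μ'' : V → Bool := fun v => (μ v).getD (decide (AtomD.labelV v true ∈ Y)) with hμ''
      set σ'' : (V × V) → Bool :=
        fun e => (σ e).getD (decide (AtomD.labelE e.1 e.2 true ∈ Y)) with hσ''
      have hmu : ∀ x : V, (x ∈ MICverts E W ∨ (μ x).isSome) →
          AtomD.labelV x (μ'' x) ∈ Y := by
        intro x hx
        cases hmx : μ x with
        | some s =>
          have h1 : μ'' x = s := by simp [hμ'', hmx]
          rw [h1]; exact hlabelVobsY x s hmx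
        | none =>
          have hx' : x ∈ MICverts E W := by
            rcases hx with h | h
            · exact h
            · rw [hmx] at h; cases h
          by_cases h2 : AtomD.labelV x true ∈ Y
          · have h1 : μ'' x = true := by simp [hμ'', hmx, h2]
            rw [h1]; exact h2
          · have h1 : μ'' x = false := by simp [hμ'', hmx, h2]
            rw [h1]
            rcases hlabelVsomeY x hx' with h | h
            · exact absurd h h2
            · exact h
      have hse : ∀ u v : V, (u, v) ∈ E → v ∈ W → AtomD.labelE u v (σ'' (u, v)) ∈ Y := by
        intro u v hE hv
        cases hmx : σ (u, v) with
        | some s =>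
          have h1 : σ'' (u, v) = s := by simp [hσ'', hmx]
          rw [h1]; exact hlabelEobsY u v s hE hmx
        | none =>
          by_cases h2 : AtomD.labelE u v true ∈ Y
          · have h1 : σ'' (u, v) = true := by simp [hσ'', hmx, h2]
            rw [h1]; exact h2
          · have h1 : σ'' (u, v) = false := by simp [hσ'', hmx, h2]
            rw [h1]
            rcases hlabelEsomeY u v hE hv with h | h
            · exact absurd h h2
            · exact h
      refine ⟨σ'', μ'', fun e s h => by simp [hσ'', h], fun i s h => by simp [hμ'', h], ?_⟩
      intro v hv _
      have hnotall : ∃ u, (u, v) ∈ E ∧ AtomD.opposite u v ∉ Y := by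
        by_contra hco
        push_neg at hco
        apply hb
        refine hder1 _ _ _ (Or.inl (pd11 v)) (Set.empty_inter _) ?_
        intro a ha
        rcases Set.mem_insert_iff.mp ha with rfl | ha
        · exact hactY v hv
        · obtain ⟨u, hE, rfl⟩ := ha
          exact hco u hE
      obtain ⟨u, hE, hopp⟩ := hnotall
      refine ⟨u, hE, ?_⟩
      have hLv := hmu v (Or.inl (Or.inl hv))
      have hLu := hmu u (Or.inl (Or.inr ⟨v, hE, hv⟩))
      have hLe := hse u v hE hv
      cases hs : σ'' (u, v) with
      | false =>
        rw [hs] at hLe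
        have h9 : AtomD.labelV v (μ'' u) ∉ Y := by
          intro hvy
          exact hopp (hder1 _ _ _ (Or.inl (pd9 u v (μ'' u) hE)) (Set.empty_inter _)
            (hsub3 hLe hLu hvy))
        cases h1 : μ'' u <;> cases h2 : μ'' v <;> rw [h1] at h9 hLu <;> rw [h2] at hLv
        · exact absurd hLv h9
        · rfl
        · rfl
        · exact absurd hLv h9
      | true =>
        rw [hs] at hLe
        have h10 : μ'' u = μ'' v := by
          by_contra hne
          exact hopp (hder1 _ _ _ (Or.inl (pd10 u v (μ'' u) (μ'' v) hE hne))
            (Set.empty_inter _) (hsub3 hLe hLu hLv))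
        rw [← h10]
        cases μ'' u <;> rfl
    have hlabelVY : ∀ (v : V) (s : Bool), AtomD.labelV v s ∈ Y := fun v s =>
      hder1 _ _ _ (Or.inl (pd13 v s)) (Set.empty_inter _) (hsub2 hbottomY (hvertY v))
    have hlabelEY : ∀ (u v : V) (s : Bool), (u, v) ∈ E → AtomD.labelE u v s ∈ Y :=
      fun u v s hE => hder1 _ _ _ (Or.inl (pd14 u v s hE)) (Set.empty_inter _)
        (hsub2 hbottomY (hedgeY u v hE))
    have hoppY : ∀ u v : V, (u, v) ∈ E → AtomD.opposite u v ∈ Y := fun u v hE =>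
      hder1 _ _ _ (Or.inl (pd9 u v true hE)) (Set.empty_inter _)
        (hsub3 (hlabelEY u v false hE) (hlabelVY u true) (hlabelVY v true))
    have hlabelV'Y : ∀ w ∈ W, ∀ v : V, (v ∈ MICverts E W ∨ (μ v).isSome) →
        AtomD.labelV' w v (mV w v) ∈ Y := by
      intro w hw v hc
      cases hmx : μ v with
      | some s =>
        rw [hextμ w hw v s hmx]
        exact hder1 _ _ _ (Or.inl (pd17 w v s)) (Set.empty_inter _)
          (hsub2 (hactY w hw) (hobsVY v s hmx))
      | none =>
        have hv : v ∈ MICverts E W := by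
          rcases hc with h | h
          · exact h
          · rw [hmx] at h; cases h
        obtain ⟨b, hb, hbY⟩ := hder _ _ _ (Or.inl (pd15 w v)) (Set.empty_inter _)
          (hsub2 (hactY w hw) (hvMICY v hv))
        simp only [Set.mem_insert_iff, Set.mem_singleton_iff] at hb
        rcases hb with rfl | rfl
        · rw [← ((mem_labelV' w v true).mp (hYX hbY)).2.2]
          exact hbY
        · rw [← ((mem_labelV' w v false).mp (hYX hbY)).2.2]
          exact hbY
    have hlabelE'Y : ∀ w ∈ W, ∀ u v : V, (u, v) ∈ E → (v ∈ W ∨ (σ (u, v)).isSome) →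
        AtomD.labelE' w u v (sE w (u, v)) ∈ Y := by
      intro w hw u v hE hc
      cases hmx : σ (u, v) with
      | some s =>
        rw [hextσ w hw (u, v) s hmx]
        exact hder1 _ _ _ (Or.inl (pd18 w u v s hE)) (Set.empty_inter _)
          (hsub2 (hactY w hw) (hobsEY u v s hE hmx))
      | none =>
        have hv : v ∈ W := by
          rcases hc with h | h
          · exact h
          · rw [hmx] at h; cases h
        obtain ⟨b, hb, hbY⟩ := hder _ _ _ (Or.inl (pd16 w u v hE)) (Set.empty_inter _)
          (hsub2 (hactY w hw) (hedgeMICY u v hE hv))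
        simp only [Set.mem_insert_iff, Set.mem_singleton_iff] at hb
        rcases hb with rfl | rfl
        · rw [← ((mem_labelE' w u v true).mp (hYX hbY)).2.2.2]
          exact hbY
        · rw [← ((mem_labelE' w u v false).mp (hYX hbY)).2.2.2]
          exact hbY
    have hrecY : ∀ w ∈ W, ∀ v u : V, v ≠ w → (u, v) ∈ E →
        (v ∈ W ∨ (σ (u, v)).isSome) → (u ∈ MICverts E W ∨ (μ u).isSome) →
        AtomD.receive' w v (signMul (mV w u) (sE w (u, v))) ∈ Y := by
      intro w hw v u hvw hE hcv hcu
      have hLe := hlabelE'Y w hw u v hE hcv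
      have hLu := hlabelV'Y w hw u hcu
      by_cases hts : mV w u = sE w (u, v)
      · have h1 : signMul (mV w u) (sE w (u, v)) = true := by
          rw [hts]; cases sE w (u, v) <;> rfl
        rw [h1]
        exact hder1 _ _ _ (Or.inl (pd19 w u v (sE w (u, v)) hE hvw)) (Set.empty_inter _)
          (hsub2 hLe (hts ▸ hLu))
      · have h1 : signMul (mV w u) (sE w (u, v)) = false := by
          cases ha : mV w u <;> cases hb2 : sE w (u, v) <;>
            first | rfl | (rw [ha, hb2] at hts; exact absurd rfl hts)
        rw [h1]
        exact hder1 _ _ _ (Or.inl (pd20 w u v (sE w (u, v)) (mV w u) hE hvw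
          (fun h => hts h.symm))) (Set.empty_inter _) (hsub2 hLe hLu)
    apply Set.Subset.antisymm hYX
    intro a haX
    cases a with
    | vertex i => exact hvertY i
    | edge u v => exact hedgeY u v ((mem_edge u v).mp haX)
    | observedE u v s =>
      obtain ⟨hE, hs⟩ := (mem_observedE u v s).mp haX
      exact hobsEY u v s hE hs
    | observedV v s => exact hobsVY v s ((mem_observedV v s).mp haX)
    | input i => exact hinputY i ((mem_input i).mp haX)
    | labelV v s => exact hlabelVY v s
    | labelE u v s => exact hlabelEY u v s ((mem_labelE u v s).mp haX)
    | active i => exact hactY i ((mem_active i).mp haX)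
    | inactive i =>
      obtain ⟨h1, h2⟩ := (mem_inactive i).mp haX
      exact hinactY i h1 h2
    | edgeMIC u v =>
      obtain ⟨hE, hv⟩ := (mem_edgeMIC u v).mp haX
      exact hedgeMICY u v hE hv
    | vertexMIC u => exact hvMICY u ((mem_vertexMIC u).mp haX)
    | opposite u v => exact hoppY u v ((mem_opposite u v).mp haX)
    | bottom => exact hbottomY
    | labelV' w v s =>
      obtain ⟨hw, hc, rfl⟩ := (mem_labelV' w v s).mp haX
      exact hlabelV'Y w hw v hc
    | labelE' w u v s =>
      obtain ⟨hw, hE, hc, rfl⟩ := (mem_labelE' w u v s).mp haX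
      exact hlabelE'Y w hw u v hE hc
    | receive' w v b =>
      obtain ⟨hw, hvw, u, hE, hcv, hcu, rfl⟩ := (mem_receive' w v b).mp haX
      exact hrecY w hw v u hvw hE hcv hcu
end

section
/- Input reduction, condition 1 (positive self-loop): Let (V,E,σ) be an influence graph with input set I and μ : V → {+,−} a partial vertex labeling, and let i ∈ V be a non-input vertex such that (i,i) ∈ E and σ(i,i) = +. Then (V,E,σ) with input set I and μ are consistent if and only if (V,E,σ) with input set I ∪ {i} and μ are consistent. -/
/-- Input reduction, condition 1 (positive self-loop): if a non-input vertex `i`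
has a self-loop `(i, i) ∈ E` with `σ(i,i) = +`, then consistency with inputs `I`
is equivalent to consistency with inputs `I ∪ {i}`. -/
theorem input_reduction_selfloop {V : Type} [Fintype V]
    (E : Set (V × V)) (σ : V × V → Option Bool) (μ : V → Option Bool) (I : Set V)
    (hσ : ∀ e, σ e ≠ none → e ∈ E)
    (i : V) (hi : i ∉ I) (hloop : (i, i) ∈ E) (hpos : σ (i, i) = some true) :
    Consistent E σ μ I ↔ Consistent E σ μ (I ∪ {i}) := by
  constructor
  · rintro ⟨σ', μ', h1, h2, h3⟩
    exact ⟨σ', μ', h1, h2, fun v hv hvI => h3 v hv (fun h => hvI (Or.inl h))⟩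
  · rintro ⟨σ', μ', h1, h2, h3⟩
    refine ⟨σ', μ', h1, h2, fun v hv hvI => ?_⟩
    by_cases hvi : v = i
    · subst hvi
      refine ⟨v, hloop, ?_⟩
      have : σ' (v, v) = true := h1 _ _ hpos
      simp [signMul, this]
    · exact h3 v hv (by simp [hvI, hvi])
end

section
/- Input reduction, condition 2 (unlabeled incoming edge): Let (V,E,σ) be an influence graph with input set I and μ : V → {+,−} a partial vertex labeling, and let i ∈ V be a non-input vertex such that there is an edge (j,i) ∈ E with σ(j,i) undefined. Then (V,E,σ) with input set I and μ are consistent if and only if (V,E,σ) with input set I ∪ {i} and μ are consistent. -/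
/-- Input reduction, condition 2 (unlabeled incoming edge): if a non-input vertex
`i` has an incoming edge `(j, i) ∈ E` with `σ(j,i)` undefined, then consistency
with inputs `I` is equivalent to consistency with inputs `I ∪ {i}`. -/
theorem input_reduction_unlabeled_edge {V : Type} [Fintype V]
    (E : Set (V × V)) (σ : V × V → Option Bool) (μ : V → Option Bool) (I : Set V)
    (hσ : ∀ e, σ e ≠ none → e ∈ E)
    (i : V) (hi : i ∉ I) (j : V) (hj : (j, i) ∈ E) (hund : σ (j, i) = none) :
    Consistent E σ μ I ↔ Consistent E σ μ (I ∪ {i}) := by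
  classical
  constructor
  · rintro ⟨σ', μ', h1, h2, h3⟩
    exact ⟨σ', μ', h1, h2, fun k hk hkI =>
      h3 k hk (fun h => hkI (Set.mem_union_left _ h))⟩
  · rintro ⟨σ', μ', h1, h2, h3⟩
    refine ⟨Function.update σ' (j, i) (μ' j == μ' i), μ', ?_, h2, ?_⟩
    · intro e s hes
      rcases eq_or_ne e (j, i) with rfl | hne
      · rw [hund] at hes; exact absurd hes (by simp)
      · rw [Function.update_of_ne hne]; exact h1 e s hes
    · intro k _ hkI
      rcases eq_or_ne k i with rfl | hne
      · refine ⟨j, hj, ?_⟩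
        rw [Function.update_self, signMul]
        cases μ' j <;> cases μ' k <;> rfl
      · obtain ⟨l, hl, hlk⟩ := h3 k trivial (by
          intro h; rcases h with h | h
          · exact hkI h
          · exact hne h)
        refine ⟨l, hl, ?_⟩
        rw [Function.update_of_ne (by simp [hne])]
        exact hlk
end

section
/- Input reduction, condition 3 (opposite observed influences): Let (V,E,σ) be an influence graph with input set I and μ : V → {+,−} a partial vertex labeling, and let i ∈ V be a non-input vertex such that there are edges (j,i), (k,i) ∈ E with σ(j,i), σ(k,i), μ(j), μ(k) all defined, μ(j)·σ(j,i) = + and μ(k)·σ(k,i) = −. Then (V,E,σ) with input set I and μ are consistent if and only if (V,E,σ) with input set I ∪ {i} and μ are consistent. -/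
/-- Input reduction, condition 3 (opposite observed influences): if a non-input
vertex `i` receives, from observed regulators via labeled edges, both a positive
and a negative influence, then consistency with inputs `I` is equivalent to
consistency with inputs `I ∪ {i}`. -/
theorem input_reduction_opposite_influences {V : Type} [Fintype V]
    (E : Set (V × V)) (σ : V × V → Option Bool) (μ : V → Option Bool) (I : Set V)
    (hσ : ∀ e, σ e ≠ none → e ∈ E)
    (i : V) (hi : i ∉ I)
    (j k : V) (hj : (j, i) ∈ E) (hk : (k, i) ∈ E)
    (sj sk tj tk : Bool)
    (hσj : σ (j, i) = some sj) (hμj : μ j = some tj)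
    (hσk : σ (k, i) = some sk) (hμk : μ k = some tk)
    (hplus : signMul tj sj = true) (hminus : signMul tk sk = false) :
    Consistent E σ μ I ↔ Consistent E σ μ (I ∪ {i}) := by
  constructor
  · rintro ⟨σ', μ', h1, h2, h3⟩
    exact ⟨σ', μ', h1, h2, fun v hv hvI => h3 v hv (fun h => hvI (Or.inl h))⟩
  · rintro ⟨σ', μ', h1, h2, h3⟩
    refine ⟨σ', μ', h1, h2, fun v hv hvI => ?_⟩
    by_cases hvi : v = i
    · subst hvi
      have hσj' := h1 _ _ hσj
      have hμj' := h2 _ _ hμj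
      have hσk' := h1 _ _ hσk
      have hμk' := h2 _ _ hμk
      cases hm : μ' v
      · exact ⟨k, hk, by simp [hσk', hμk', hminus]⟩
      · exact ⟨j, hj, by simp [hσj', hμj', hplus]⟩
    · exact h3 v hv (fun h => h.elim hvI (fun h => hvi h))
end

section
/- Input reduction, condition 4 (observed variation already explained): Let (V,E,σ) be an influence graph with input set I and μ : V → {+,−} a partial vertex labeling, and let i ∈ V be a non-input vertex such that μ(i) is defined and there is an edge (j,i) ∈ E with σ(j,i) and μ(j) defined and μ(j)·σ(j,i) = μ(i). Then (V,E,σ) with input set I and μ are consistent if and only if (V,E,σ) with input set I ∪ {i} and μ are consistent. -/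
/-- Input reduction, condition 4 (observed variation already explained): if a
non-input vertex `i` has an observed variation `μ(i)` and an incoming edge
`(j, i) ∈ E` with `σ(j,i)` and `μ(j)` defined and `μ(j)·σ(j,i) = μ(i)`, then
consistency with inputs `I` is equivalent to consistency with inputs `I ∪ {i}`. -/
theorem input_reduction_explained {V : Type} [Fintype V]
    (E : Set (V × V)) (σ : V × V → Option Bool) (μ : V → Option Bool) (I : Set V)
    (hσ : ∀ e, σ e ≠ none → e ∈ E)
    (i : V) (hi : i ∉ I)
    (r : Bool) (hμi : μ i = some r)
    (j : V) (s t : Bool) (hj : (j, i) ∈ E)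
    (hσj : σ (j, i) = some s) (hμj : μ j = some t) (hmatch : signMul t s = r) :
    Consistent E σ μ I ↔ Consistent E σ μ (I ∪ {i}) := by
  constructor
  · rintro ⟨σ', μ', h1, h2, h3⟩
    exact ⟨σ', μ', h1, h2, fun k hk hkI => h3 k hk (fun h => hkI (Or.inl h))⟩
  · rintro ⟨σ', μ', h1, h2, h3⟩
    refine ⟨σ', μ', h1, h2, fun k hk hkI => ?_⟩
    by_cases hki : k = i
    · subst hki
      refine ⟨j, hj, ?_⟩
      rw [h2 k r hμi, h2 j t hμj, h1 (j, k) s hσj, hmatch]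
    · exact h3 k hk (by simp [hkI, hki])
end
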